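/- arXiv:1904.08838 — 10 statements merged into one kernel-verified Lean document; each statement's English description precedes it below -/
import Mathlib

section
/- Let V be a nonempty finite type, let k ≥ 1, and let E_0, …, E_k be nonzero complex V×V matrices which are Hermitian, pairwise orthogonal idempotents (E_s · E_t equals E_s if s = t and equals the zero matrix otherwise) and which sum to the identity matrix. Let θ_0, …, θ_k be real numbers, let A = Σ_{s=0}^k θ_s E_s, let B = Σ_{s=0}^k (−1)^s E_s, and let τ > 0 be real. Then there exists γ ∈ ℂ with |γ| = 1 and exp(−iτA) = γ · B if and only if for every s ∈ {1, …, k} there is an odd integer z_s with τ·(θ_s − θ_{s−1}) = z_s · π. -/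
/-!
Sending `c : Fin (k + 1) → ℂ` to `∑ s, c s • E s` is a continuous algebra homomorphism, injective
because no `E s` vanishes. It therefore commutes with `exp`, so `exp (-iτA)` has coefficient
`exp (-iτθ_s)` on `E s`, and `exp (-iτA) = γ B` says exactly that these coefficients are
`γ (-1)^s`. Consecutive coefficients must then have ratio `-1`, i.e. `τ (θ_s - θ_{s-1}) ∈ π (2ℤ + 1)`;
conversely these ratios force the coefficients to alternate with `γ = exp (-iτθ_0)`, a unit.
-/

open NormedSpace
open Complex (I)
open scoped Real

namespace OrthogonalIdempotents

variable {𝕜 R ι : Type*} [CommSemiring 𝕜] [Semiring R] [Algebra 𝕜 R] [Fintype ι] {e : ι → R}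

theorem sum_smul_mul (he : OrthogonalIdempotents e) (c : ι → 𝕜) (j : ι) :
    (∑ i, c i • e i) * e j = c j • e j := by
  classical
  simp_rw [Finset.sum_mul, smul_mul_assoc, he.mul_eq, smul_ite, smul_zero,
    Finset.sum_ite_eq', Finset.mem_univ, if_true]

theorem sum_smul_mul_sum_smul (he : OrthogonalIdempotents e) (c d : ι → 𝕜) :
    (∑ i, c i • e i) * ∑ j, d j • e j = ∑ i, (c i * d i) • e i := by
  simp_rw [Finset.mul_sum, mul_smul_comm, he.sum_smul_mul, smul_smul, mul_comm]

end OrthogonalIdempotents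

namespace CompleteOrthogonalIdempotents

variable {𝕜 R ι : Type*} [Fintype ι] {e : ι → R}

section Algebra

variable [CommSemiring 𝕜] [Semiring R] [Algebra 𝕜 R]

def piAlgHom (he : CompleteOrthogonalIdempotents e) : (ι → 𝕜) →ₐ[𝕜] R where
  toFun c := ∑ i, c i • e i
  map_one' := by simpa using he.complete
  map_mul' c d := (he.sum_smul_mul_sum_smul c d).symm
  map_zero' := by simp
  map_add' c d := by simp [add_smul, Finset.sum_add_distrib]
  commutes' r := by simp [← Finset.smul_sum, he.complete, Algebra.algebraMap_eq_smul_one]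

@[simp]
theorem piAlgHom_apply (he : CompleteOrthogonalIdempotents e) (c : ι → 𝕜) :
    he.piAlgHom c = ∑ i, c i • e i :=
  rfl

end Algebra

theorem piAlgHom_injective {𝕜 : Type*} [CommRing 𝕜] [IsDomain 𝕜] [Ring R] [Algebra 𝕜 R]
    [Module.IsTorsionFree 𝕜 R] (he : CompleteOrthogonalIdempotents e) (hne : ∀ i, e i ≠ 0) :
    Function.Injective (he.piAlgHom (𝕜 := 𝕜)) := by
  intro c d hcd
  funext j
  apply smul_left_injective 𝕜 (hne j)
  simpa [he.sum_smul_mul] using congrArg (· * e j) hcd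

theorem exp_sum_smul [NormedRing R] [NormedAlgebra ℂ R] (he : CompleteOrthogonalIdempotents e)
    (c : ι → ℂ) : exp (∑ i, c i • e i) = ∑ i, Complex.exp (c i) • e i := by
  -- `map_exp` needs some `ℚ`-algebra structure; `exp` does not depend on the choice.
  let : Algebra ℚ R := Algebra.compHom R (algebraMap ℚ ℂ)
  have hcont : Continuous (he.piAlgHom (𝕜 := ℂ)) :=
    continuous_finsetSum _ fun i _ => (continuous_apply i).smul continuous_const
  have := map_exp he.piAlgHom hcont c
  simp only [piAlgHom_apply, Pi.coe_exp, ← Complex.exp_eq_exp_ℂ] at this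
  exact this.symm

theorem matrix_exp_sum_smul {V : Type*} [Fintype V] [DecidableEq V] {e : ι → Matrix V V ℂ}
    (he : CompleteOrthogonalIdempotents e) (c : ι → ℂ) :
    exp (∑ i, c i • e i) = ∑ i, Complex.exp (c i) • e i := by
  -- Any matrix norm will do: `exp` only depends on the topology.
  let : NormedRing (Matrix V V ℂ) := Matrix.linftyOpNormedRing
  let : NormedAlgebra ℂ (Matrix V V ℂ) := Matrix.linftyOpNormedAlgebra
  exact he.exp_sum_smul c

end CompleteOrthogonalIdempotents

theorem Complex.exp_mul_I_eq_neg_exp_mul_I_iff (x y : ℝ) :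
    Complex.exp (x * I) = -Complex.exp (y * I) ↔ ∃ z : ℤ, Odd z ∧ x - y = z * π := by
  have hneg : -Complex.exp (y * I) = Complex.exp ((y + π) * I) := by
    rw [add_mul, Complex.exp_add, Complex.exp_pi_mul_I, mul_neg_one]
  rw [hneg, Complex.exp_eq_exp_iff_exists_int]
  constructor
  · rintro ⟨n, hn⟩
    refine ⟨2 * n + 1, odd_two_mul_add_one n, ?_⟩
    have hmul : (x : ℂ) * I = ((y + π + n * (2 * π) : ℝ) : ℂ) * I := by
      push_cast
      linear_combination hn
    have hx := Complex.ofReal_injective (mul_right_cancel₀ Complex.I_ne_zero hmul)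
    push_cast
    linarith
  · rintro ⟨z, ⟨n, rfl⟩, h⟩
    refine ⟨n, ?_⟩
    have hx : x = y + π + n * (2 * π) := by push_cast at h; linarith
    rw [hx]
    push_cast
    ring

theorem eq_mul_neg_one_pow_of_forall_eq_neg {M : Type*} [Monoid M] [HasDistribNeg M]
    {u : ℕ → M} {k : ℕ} (h : ∀ s, 1 ≤ s → s ≤ k → u s = -u (s - 1)) :
    ∀ s ≤ k, u s = u 0 * (-1) ^ s := by
  intro s hs
  induction s with
  | zero => simp
  | succ s ih => rw [h (s + 1) (by omega) hs, Nat.add_sub_cancel, ih (by omega), pow_succ,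
      mul_neg_one, mul_neg]

theorem exists_norm_eq_one_and_exp_eq_iff (k : ℕ) (θ : ℕ → ℝ) (τ : ℝ) :
    (∃ γ : ℂ, ‖γ‖ = 1 ∧ ∀ s ≤ k, Complex.exp (-(I * τ) * θ s) = γ * (-1) ^ s) ↔
      ∀ s, 1 ≤ s → s ≤ k → ∃ z : ℤ, Odd z ∧ τ * (θ s - θ (s - 1)) = z * π := by
  have hu (s : ℕ) : -(I * τ) * θ s = ((-(τ * θ s) : ℝ) : ℂ) * I := by push_cast; ring
  have step (s : ℕ) : Complex.exp (-(I * τ) * θ s) = -Complex.exp (-(I * τ) * θ (s - 1)) ↔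
      ∃ z : ℤ, Odd z ∧ τ * (θ s - θ (s - 1)) = z * π := by
    rw [hu, hu, Complex.exp_mul_I_eq_neg_exp_mul_I_iff]
    refine ⟨fun ⟨z, hz, h⟩ => ⟨-z, hz.neg, ?_⟩, fun ⟨z, hz, h⟩ => ⟨-z, hz.neg, ?_⟩⟩ <;>
      push_cast <;> linarith
  constructor
  · rintro ⟨γ, -, hγ⟩ s hs hsk
    rw [← step, hγ s hsk, hγ (s - 1) (by omega), ← Nat.sub_add_cancel hs, pow_succ]
    simp
  · intro h
    refine ⟨_, by rw [hu]; exact Complex.norm_exp_ofReal_mul_I _,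
      eq_mul_neg_one_pow_of_forall_eq_neg fun s hs hsk => (step s).2 (h s hs hsk)⟩

theorem CompleteOrthogonalIdempotents.of_range {R : Type*} [Semiring R] {E : ℕ → R} {k : ℕ}
    (hmul : ∀ s ≤ k, ∀ t ≤ k, E s * E t = if s = t then E s else 0)
    (hsum : ∑ s ∈ Finset.range (k + 1), E s = 1) :
    CompleteOrthogonalIdempotents fun i : Fin (k + 1) => E i where
  toOrthogonalIdempotents := OrthogonalIdempotents.iff_mul_eq.2 fun i j => by
    simpa [Fin.val_inj] using hmul i (Nat.lt_succ_iff.1 i.isLt) j (Nat.lt_succ_iff.1 j.isLt)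
  complete := by rwa [Fin.sum_univ_eq_sum_range (fun s => E s)]

theorem stmt_0_general {V : Type*} [Fintype V] [DecidableEq V]
    (k : ℕ)
    (E : ℕ → Matrix V V ℂ)
    (hE_ne : ∀ s ≤ k, E s ≠ 0)
    (hE_mul : ∀ s ≤ k, ∀ t ≤ k, E s * E t = if s = t then E s else 0)
    (hE_sum : ∑ s ∈ Finset.range (k + 1), E s = 1)
    (θ : ℕ → ℝ) (τ : ℝ)
    (A B : Matrix V V ℂ)
    (hA : A = ∑ s ∈ Finset.range (k + 1), (θ s : ℂ) • E s)
    (hB : B = ∑ s ∈ Finset.range (k + 1), ((-1 : ℂ)) ^ s • E s) :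
    (∃ γ : ℂ, ‖γ‖ = 1 ∧
        NormedSpace.exp ((-(Complex.I * (τ : ℂ))) • A) = γ • B) ↔
      (∀ s, 1 ≤ s → s ≤ k →
        ∃ z : ℤ, Odd z ∧ τ * (θ s - θ (s - 1)) = z * Real.pi) := by
  have he := CompleteOrthogonalIdempotents.of_range hE_mul hE_sum
  have hne (i : Fin (k + 1)) : E i ≠ 0 := hE_ne i (Nat.lt_succ_iff.1 i.isLt)
  have hexp : exp ((-(I * τ)) • A) = he.piAlgHom fun i => Complex.exp (-(I * τ) * θ i) := by
    simp_rw [hA, Finset.smul_sum, smul_smul]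
    rw [← Fin.sum_univ_eq_sum_range (fun s => _ • E s)]
    exact he.matrix_exp_sum_smul _
  have hγB (γ : ℂ) : γ • B = he.piAlgHom fun i => γ * (-1) ^ (i : ℕ) := by
    simp_rw [hB, Finset.smul_sum, smul_smul]
    rw [← Fin.sum_univ_eq_sum_range (fun s => _ • E s)]
    rfl
  simp_rw [hexp, hγB, (he.piAlgHom_injective hne).eq_iff, funext_iff, Fin.forall_iff,
    Nat.lt_succ_iff]
  exact exists_norm_eq_one_and_exp_eq_iff k θ τ

/-- Perfect state transfer criterion via spectral decomposition:
`exp(-iτA)` is a unimodular multiple of `B = Σ (-1)^s E_s` iff all scaled consecutive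
eigenvalue differences `τ(θ_s - θ_{s-1})` are odd multiples of `π`. -/
theorem stmt_0 {V : Type*} [Fintype V] [Nonempty V] [DecidableEq V]
    (k : ℕ) (hk : 1 ≤ k)
    (E : ℕ → Matrix V V ℂ)
    (hE_ne : ∀ s ≤ k, E s ≠ 0)
    (hE_herm : ∀ s ≤ k, (E s).IsHermitian)
    (hE_mul : ∀ s ≤ k, ∀ t ≤ k, E s * E t = if s = t then E s else 0)
    (hE_sum : ∑ s ∈ Finset.range (k + 1), E s = 1)
    (θ : ℕ → ℝ) (τ : ℝ) (hτ : 0 < τ)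
    (A B : Matrix V V ℂ)
    (hA : A = ∑ s ∈ Finset.range (k + 1), (θ s : ℂ) • E s)
    (hB : B = ∑ s ∈ Finset.range (k + 1), ((-1 : ℂ)) ^ s • E s) :
    (∃ γ : ℂ, ‖γ‖ = 1 ∧
        NormedSpace.exp ((-(Complex.I * (τ : ℂ))) • A) = γ • B) ↔
      (∀ s, 1 ≤ s → s ≤ k →
        ∃ z : ℤ, Odd z ∧ τ * (θ s - θ (s - 1)) = z * Real.pi) :=
  stmt_0_general k E hE_ne hE_mul hE_sum θ τ A B hA hB
end

section
/- Let k and m be natural numbers with m ≤ k, and let w_0, w_1, …, w_m be real numbers. Define f : ℕ → ℝ by f(x) = Σ_{r=0}^{m} w_r · Σ_{j=0}^{r} (−1)^{r−j} · C(2j,j) · C(k−j, r−j) · C(x+j, 2j). Then f(x) is an integer for every x ∈ {0, 1, …, k} if and only if there exist integers c_0, c_1, …, c_m such that for every r ∈ {0, 1, …, m}, w_r = Σ_{j=r}^{m} (c_j / C(2j,j)) · C(k−r, j−r). -/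
/-!
Expanding in the basis `C(x+j, 2j)` gives `f x = Σ_j C(x+j, 2j) A_j` with
`A_j = C(2j, j) Σ_r (-1)^(r-j) C(k-j, r-j) w_r`. Since `C(x+j, 2j)` vanishes for `j > x` and is
`1` for `j = x`, the values `f 0, …, f m` are integers exactly when every `A_j` is. Binomial
inversion, resting on `Σ_s (-1)^(s-a) C(k-a, s-a) C(k-s, b-s) = [a = b]`, turns
`A_j = C(2j, j) c_j` into `w_r = Σ_j C(k-r, j-r) c_j / C(2j, j)`.
-/

open Finset

section Inversion

variable {R : Type*} [CommRing R]

theorem sum_range_neg_one_pow_mul_choose (n : ℕ) :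
    ∑ i ∈ range (n + 1), (-1 : R) ^ i * n.choose i = if n = 0 then 1 else 0 := by
  have h := congrArg (Int.cast : ℤ → R) (Int.alternating_sum_range_choose (n := n))
  push_cast at h
  rw [h]

theorem sum_range_neg_one_pow_sub_mul_choose (n : ℕ) :
    ∑ i ∈ range (n + 1), (-1 : R) ^ (n - i) * n.choose i = if n = 0 then 1 else 0 := by
  rw [← sum_range_neg_one_pow_mul_choose, ← sum_range_reflect]
  refine sum_congr rfl fun i hi => ?_
  have hi : i ≤ n := Nat.lt_succ_iff.mp (mem_range.mp hi)
  rw [Nat.add_sub_cancel, Nat.sub_sub_self hi, Nat.choose_symm hi]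

theorem sum_Icc_mul_choose_mul_choose (g : ℕ → R) {a b : ℕ} (k : ℕ) (hab : a ≤ b) :
    ∑ s ∈ Icc a b, g (s - a) * (k - a).choose (s - a) * (k - s).choose (b - s) =
      (k - a).choose (b - a) * ∑ i ∈ range (b - a + 1), g i * (b - a).choose i := by
  rw [← Ico_add_one_right_eq_Icc, sum_Ico_eq_sum_range, Nat.sub_add_comm hab, mul_sum]
  refine sum_congr rfl fun i hi => ?_
  have hi : i ≤ b - a := Nat.lt_succ_iff.mp (mem_range.mp hi)
  have hchoose := Nat.choose_mul (n := k - a) hi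
  rw [Nat.add_sub_cancel_left, ← Nat.sub_sub, ← Nat.sub_sub, mul_assoc, ← Nat.cast_mul,
    ← hchoose]
  push_cast
  ring

theorem sum_Icc_neg_one_pow_choose_mul_choose {a b : ℕ} (k : ℕ) (hab : a ≤ b) :
    ∑ s ∈ Icc a b, (-1 : R) ^ (s - a) * (k - a).choose (s - a) * (k - s).choose (b - s) =
      if a = b then 1 else 0 := by
  rw [sum_Icc_mul_choose_mul_choose (fun i => (-1 : R) ^ i) k hab,
    sum_range_neg_one_pow_mul_choose]
  by_cases h : a = b
  · simp [h]
  · simp [h, Nat.sub_eq_zero_iff_le, hab.lt_of_ne h |>.not_ge]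

theorem sum_Icc_choose_mul_neg_one_pow_choose {a b : ℕ} (k : ℕ) (hab : a ≤ b) :
    ∑ s ∈ Icc a b, (k - a).choose (s - a) * ((-1 : R) ^ (b - s) * (k - s).choose (b - s)) =
      if a = b then 1 else 0 := by
  have hsign : ∀ s ∈ Icc a b,
      (k - a).choose (s - a) * ((-1 : R) ^ (b - s) * (k - s).choose (b - s)) =
        (-1 : R) ^ (b - a - (s - a)) * (k - a).choose (s - a) * (k - s).choose (b - s) := by
    intro s hs
    have hs := mem_Icc.mp hs
    rw [show b - a - (s - a) = b - s by omega]
    ring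
  rw [sum_congr rfl hsign,
    sum_Icc_mul_choose_mul_choose (fun i => (-1 : R) ^ (b - a - i)) k hab,
    sum_range_neg_one_pow_sub_mul_choose]
  by_cases h : a = b
  · simp [h]
  · simp [h, Nat.sub_eq_zero_iff_le, hab.lt_of_ne h |>.not_ge]

theorem sum_Icc_sum_Icc_comm {M : Type*} [AddCommMonoid M] (a m : ℕ) (F : ℕ → ℕ → M) :
    ∑ j ∈ Icc a m, ∑ s ∈ Icc j m, F j s = ∑ s ∈ Icc a m, ∑ j ∈ Icc a s, F j s :=
  sum_comm' fun _ _ => by simp only [mem_Icc]; omega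

theorem binomial_inversion (k m : ℕ) (v w : ℕ → R) :
    (∀ r ≤ m, w r = ∑ j ∈ Icc r m, v j * (k - r).choose (j - r)) ↔
      ∀ j ≤ m, v j = ∑ r ∈ Icc j m, (-1 : R) ^ (r - j) * (k - j).choose (r - j) * w r := by
  constructor
  · intro hw j hj
    calc v j = ∑ s ∈ Icc j m, v s * if j = s then 1 else 0 := by
          simp [sum_ite_eq, hj]
      _ = ∑ s ∈ Icc j m, ∑ r ∈ Icc j s,
            (-1 : R) ^ (r - j) * (k - j).choose (r - j) * (v s * (k - r).choose (s - r)) := by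
          refine sum_congr rfl fun s hs => ?_
          rw [← sum_Icc_neg_one_pow_choose_mul_choose k (mem_Icc.mp hs).1, mul_sum]
          exact sum_congr rfl fun r _ => by ring
      _ = _ := by
          rw [← sum_Icc_sum_Icc_comm]
          refine sum_congr rfl fun r hr => ?_
          rw [hw r (mem_Icc.mp hr).2, mul_sum]
  · intro hv r hr
    calc w r = ∑ s ∈ Icc r m, (if r = s then 1 else 0) * w s := by
          simp [sum_ite_eq, hr]
      _ = ∑ s ∈ Icc r m, ∑ j ∈ Icc r s,
            (-1 : R) ^ (s - j) * (k - j).choose (s - j) * w s * (k - r).choose (j - r) := by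
          refine sum_congr rfl fun s hs => ?_
          rw [← sum_Icc_choose_mul_neg_one_pow_choose k (mem_Icc.mp hs).1, sum_mul]
          exact sum_congr rfl fun j _ => by ring
      _ = _ := by
          rw [← sum_Icc_sum_Icc_comm]
          refine sum_congr rfl fun j hj => ?_
          rw [hv j (mem_Icc.mp hj).2, sum_mul]

end Inversion

section Integrality

variable {M : Type*} [AddCommGroup M]

theorem sum_range_choose_add_smul_eq {m x : ℕ} (hx : x ≤ m) (A : ℕ → M) :
    ∑ j ∈ range (m + 1), (x + j).choose (2 * j) • A j =
      ∑ j ∈ range x, (x + j).choose (2 * j) • A j + A x := by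
  have htail : ∑ j ∈ Ico (x + 1) (m + 1), (x + j).choose (2 * j) • A j = 0 :=
    sum_eq_zero fun j hj => by
      rw [Nat.choose_eq_zero_of_lt (by simp only [mem_Ico] at hj; omega), zero_smul]
  rw [← sum_range_add_sum_Ico _ (Nat.succ_le_succ hx), htail, add_zero, sum_range_succ,
    ← two_mul, Nat.choose_self, one_smul]

theorem forall_sum_choose_smul_mem_iff (S : AddSubgroup M) {m n : ℕ} (hmn : m ≤ n)
    (A : ℕ → M) :
    (∀ x ≤ n, ∑ j ∈ range (m + 1), (x + j).choose (2 * j) • A j ∈ S) ↔ ∀ j ≤ m, A j ∈ S := by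
  refine ⟨fun h j => ?_, fun h x _ => ?_⟩
  · induction j using Nat.strong_induction_on with
    | _ j ih =>
      intro hj
      have hsum := h j (hj.trans hmn)
      rw [sum_range_choose_add_smul_eq hj] at hsum
      refine (S.add_mem_cancel_left (S.sum_mem fun i hi => S.nsmul_mem ?_ _)).mp hsum
      exact ih i (mem_range.mp hi) ((mem_range.mp hi).le.trans hj)
  · exact S.sum_mem fun j hj => S.nsmul_mem (h j (Nat.lt_succ_iff.mp (mem_range.mp hj))) _

end Integrality

theorem sum_mul_sum_choose_eq_sum_choose_smul {R : Type*} [CommRing R] (k m x : ℕ)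
    (w : ℕ → R) :
    ∑ r ∈ range (m + 1), w r * ∑ j ∈ range (r + 1), (-1 : R) ^ (r - j) *
        ((2 * j).choose j : R) * ((k - j).choose (r - j) : R) * ((x + j).choose (2 * j) : R) =
      ∑ j ∈ range (m + 1), (x + j).choose (2 * j) •
        ((2 * j).choose j * ∑ r ∈ Icc j m, (-1 : R) ^ (r - j) * (k - j).choose (r - j) * w r) := by
  simp only [mul_sum, nsmul_eq_mul]
  refine (sum_comm' fun r j => ?_).trans
    (sum_congr rfl fun j _ => sum_congr rfl fun r _ => by ring)
  simp only [mem_range, mem_Icc]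
  omega

/-- A weighted graph of the Johnson scheme `J(2k,k)` with weights `w_0,…,w_m` has integral
spectrum iff the weights are of the form `w_r = Σ_{j=r}^m (c_j / C(2j,j)) C(k-r, j-r)`
for integers `c_0,…,c_m`. -/
theorem stmt_6 (k m : ℕ) (hm : m ≤ k) (w : ℕ → ℝ)
    (f : ℕ → ℝ)
    (hf : ∀ x, f x = ∑ r ∈ Finset.range (m + 1), w r *
        ∑ j ∈ Finset.range (r + 1), (-1 : ℝ) ^ (r - j) *
          (Nat.choose (2 * j) j : ℝ) * (Nat.choose (k - j) (r - j) : ℝ) *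
          (Nat.choose (x + j) (2 * j) : ℝ)) :
    (∀ x ≤ k, ∃ z : ℤ, f x = (z : ℝ)) ↔
      (∃ c : ℕ → ℤ, ∀ r ≤ m,
        w r = ∑ j ∈ Finset.Icc r m,
          ((c j : ℝ) / (Nat.choose (2 * j) j : ℝ)) * (Nat.choose (k - r) (j - r) : ℝ)) := by
  set u : ℕ → ℝ := fun j => ∑ r ∈ Icc j m, (-1 : ℝ) ^ (r - j) * (k - j).choose (r - j) * w r
  have hmem_int : ∀ a : ℝ, a ∈ (Int.castAddHom ℝ).range ↔ ∃ z : ℤ, a = z := fun a => by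
    rw [AddMonoidHom.mem_range]
    simp [eq_comm]
  have hchoose_ne_zero : ∀ j, ((2 * j).choose j : ℝ) ≠ 0 := fun j =>
    Nat.cast_ne_zero.mpr (Nat.choose_pos (by omega)).ne'
  calc (∀ x ≤ k, ∃ z : ℤ, f x = z)
      ↔ ∀ j ≤ m, ∃ z : ℤ, (2 * j).choose j * u j = z := by
        simp only [← hmem_int, hf, sum_mul_sum_choose_eq_sum_choose_smul]
        exact forall_sum_choose_smul_mem_iff _ hm _
    _ ↔ ∃ c : ℕ → ℤ, ∀ j ≤ m, (c j : ℝ) / (2 * j).choose j = u j := by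
        constructor
        · intro h
          choose! c hc using h
          exact ⟨c, fun j hj => by rw [← hc j hj, mul_div_cancel_left₀ _ (hchoose_ne_zero j)]⟩
        · rintro ⟨c, hc⟩ j hj
          exact ⟨c j, by rw [← hc j hj, mul_div_cancel₀ _ (hchoose_ne_zero j)]⟩
    _ ↔ _ := exists_congr fun c => (binomial_inversion k m _ w).symm
end

section
/- Let ℓ be a natural number and let j be a natural number with 1 ≤ j ≤ 2^ℓ. Then the 2-adic valuation of the binomial coefficient C(2^ℓ + j − 1, 2j − 1) equals σ₂(2^ℓ − j), the sum of the binary digits of 2^ℓ − j. -/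
lemma sum_digits_two_mul_add_one (m : ℕ) :
    (Nat.digits 2 (2 * m + 1)).sum = (Nat.digits 2 m).sum + 1 := by
  rw [Nat.digits_def' (by norm_num : 1 < 2) (by omega)]
  rw [show (2 * m + 1) % 2 = 1 by omega, show (2 * m + 1) / 2 = m by omega]
  simp [add_comm]

lemma sum_digits_pow_add (ℓ m : ℕ) (h : m < 2 ^ ℓ) :
    (Nat.digits 2 (2 ^ ℓ + m)).sum = (Nat.digits 2 m).sum + 1 := by
  have hlen : (Nat.digits 2 m).length ≤ ℓ := by
    rcases Nat.eq_zero_or_pos m with rfl | hm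
    · simp
    · rw [Nat.digits_len 2 m (by norm_num) (by omega)]
      have := Nat.log_lt_of_lt_pow (by omega : m ≠ 0) h
      omega
  have key := Nat.digits_append_zeroes_append_digits
    (b := 2) (k := ℓ - (Nat.digits 2 m).length) (m := 1) (n := m)
    (by norm_num) (by norm_num)
  rw [show (Nat.digits 2 m).length + (ℓ - (Nat.digits 2 m).length) = ℓ by omega] at key
  have : Nat.digits 2 (2 ^ ℓ + m) =
      Nat.digits 2 m ++ List.replicate (ℓ - (Nat.digits 2 m).length) 0 ++ Nat.digits 2 1 := by
    rw [key]; ring_nf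
  rw [this]
  simp

/-- For `1 ≤ j ≤ 2^ℓ`, the 2-adic valuation of `C(2^ℓ + j - 1, 2j - 1)` is the binary
digit sum of `2^ℓ - j`. -/
theorem stmt_7 (ℓ j : ℕ) (hj1 : 1 ≤ j) (hj2 : j ≤ 2 ^ ℓ) :
    padicValNat 2 (Nat.choose (2 ^ ℓ + j - 1) (2 * j - 1)) =
      (Nat.digits 2 (2 ^ ℓ - j)).sum := by
  have hk : 2 * j - 1 ≤ 2 ^ ℓ + j - 1 := by omega
  have hF : Fact (Nat.Prime 2) := ⟨Nat.prime_two⟩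
  have kum := sub_one_mul_padicValNat_choose_eq_sub_sum_digits (p := 2)
    (k := 2 * j - 1) (n := 2 ^ ℓ + j - 1) hk
  have h1 : (Nat.digits 2 (2 * j - 1)).sum = (Nat.digits 2 (j - 1)).sum + 1 := by
    rw [show 2 * j - 1 = 2 * (j - 1) + 1 by omega]
    exact sum_digits_two_mul_add_one (j - 1)
  have h2 : (Nat.digits 2 (2 ^ ℓ + j - 1)).sum = (Nat.digits 2 (j - 1)).sum + 1 := by
    rw [show 2 ^ ℓ + j - 1 = 2 ^ ℓ + (j - 1) by omega]
    exact sum_digits_pow_add ℓ (j - 1) (by omega)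
  rw [show 2 ^ ℓ + j - 1 - (2 * j - 1) = 2 ^ ℓ - j by omega, h1, h2] at kum
  omega
end

section
/- Let ℓ ≥ 1 be a natural number and let j be a natural number with 1 ≤ j < 2^ℓ. Then the binomial coefficient C(2^ℓ + j − 1, 2j − 1) is even. -/
/-!
By Kummer's theorem, the `2`-adic valuation of `C(a + b, b)` is the number of carries when
adding `a` and `b` in base `2`. Here `2 ^ ℓ + j - 1 = a + b` with `b = 2j - 1` and
`a = 2 ^ ℓ - j`. Writing `j = 2 ^ t m` with `m` odd (so `t < ℓ`), we get `b ≡ -1` and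
`a ≡ 2 ^ t (mod 2 ^ (t + 1))`, so the addition carries out of the lowest `t + 1` digits.
-/

open Finset

theorem Nat.Prime.dvd_choose_add_of_carry {p n k i : ℕ} (hp : p.Prime) (hi : 1 ≤ i)
    (hcarry : p ^ i ≤ k % p ^ i + n % p ^ i) : p ∣ (n + k).choose k := by
  set b := max i (Nat.log p (n + k)) + 1
  have hmem : i ∈ {i ∈ Ico 1 b | p ^ i ≤ k % p ^ i + n % p ^ i} :=
    mem_filter.2 ⟨mem_Ico.2 ⟨hi, by omega⟩, hcarry⟩
  rw [← pow_one p, pow_dvd_iff_le_emultiplicity, emultiplicity_choose' (b := b) hp (by omega)]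
  exact_mod_cast Finset.card_pos.2 ⟨i, hmem⟩

theorem Nat.two_pow_mul_odd_mod_two_pow_succ {t m : ℕ} (hm : Odd m) :
    2 ^ t * m % 2 ^ (t + 1) = 2 ^ t := by
  obtain ⟨r, rfl⟩ := hm
  rw [show 2 ^ t * (2 * r + 1) = r * 2 ^ (t + 1) + 2 ^ t by ring,
    Nat.mul_add_mod_of_lt (Nat.pow_lt_pow_succ one_lt_two)]

theorem Nat.mul_sub_one_mod_self {a m : ℕ} (hm : 0 < m) : (a * m - 1) % a = a - 1 := by
  rcases Nat.eq_zero_or_pos a with rfl | ha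
  · simp
  obtain ⟨m, rfl⟩ := Nat.exists_eq_add_of_lt hm
  rw [show a * (0 + m + 1) - 1 = m * a + (a - 1) by rw [zero_add, mul_add_one, mul_comm]; omega,
    Nat.mul_add_mod_of_lt (by omega)]

theorem stmt_8_general (ℓ j : ℕ) (hj1 : 1 ≤ j) (hj2 : j < 2 ^ ℓ) :
    Even (Nat.choose (2 ^ ℓ + j - 1) (2 * j - 1)) := by
  obtain ⟨t, m, hm, rfl⟩ := Nat.exists_eq_two_pow_mul_odd (n := j) (by omega)
  have ht : t < ℓ := (Nat.pow_lt_pow_iff_right (by norm_num)).1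
    ((Nat.le_mul_of_pos_right _ hm.pos).trans_lt hj2)
  have hm_lt : m < 2 ^ (ℓ - t) := by
    rw [← Nat.mul_lt_mul_left (Nat.two_pow_pos t), ← pow_add, Nat.add_sub_cancel' ht.le]
    exact hj2
  have hodd : Odd (2 ^ (ℓ - t) - m) :=
    Nat.Even.sub_odd hm_lt.le ((Nat.even_pow' (by omega)).2 even_two) hm
  have hsplit : 2 ^ ℓ + 2 ^ t * m - 1 = 2 ^ t * (2 ^ (ℓ - t) - m) + (2 * (2 ^ t * m) - 1) := by
    rw [Nat.mul_sub, ← pow_add, Nat.add_sub_cancel' ht.le]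
    omega
  rw [even_iff_two_dvd, hsplit]
  refine Nat.prime_two.dvd_choose_add_of_carry (i := t + 1) (by omega) ?_
  rw [Nat.two_pow_mul_odd_mod_two_pow_succ hodd, ← mul_assoc, ← pow_succ',
    Nat.mul_sub_one_mod_self hm.pos]
  omega

/-- For `ℓ ≥ 1` and `1 ≤ j < 2^ℓ`, the binomial coefficient `C(2^ℓ + j - 1, 2j - 1)`
is even. -/
theorem stmt_8 (ℓ j : ℕ) (hℓ : 1 ≤ ℓ) (hj1 : 1 ≤ j) (hj2 : j < 2 ^ ℓ) :
    Even (Nat.choose (2 ^ ℓ + j - 1) (2 * j - 1)) :=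
  stmt_8_general ℓ j hj1 hj2
end

section
/- Let ℓ ≥ 1 and m be natural numbers with m < 2^ℓ, and let c_1, …, c_m be integers. Then the integer Σ_{j=1}^{m} c_j · C(2^ℓ − 1 + j, 2j − 1) is even. (Consequently, if 2^ℓ ≤ k, the function g(x) = Σ_{j=1}^{m} c_j · C(x+j, 2j−1) fails to be odd at x = 2^ℓ − 1 ∈ {0, …, k−1}, so a weighted graph of the Johnson scheme J(2k,k) whose weights are supported on classes 0, 1, …, m with m < 2^ℓ cannot have perfect state transfer.) -/
lemma key_even : ∀ ℓ j : ℕ, 1 ≤ j → j < 2 ^ ℓ →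
    2 ∣ Nat.choose (2 ^ ℓ - 1 + j) (2 * j - 1) := by
  intro ℓ
  induction ℓ with
  | zero => intro j h1 h2; omega
  | succ n ih =>
    intro j h1 h2
    have hmod : Nat.choose (2 ^ (n+1) - 1 + j) (2 * j - 1) ≡
        Nat.choose ((2 ^ (n+1) - 1 + j) % 2) ((2 * j - 1) % 2) *
        Nat.choose ((2 ^ (n+1) - 1 + j) / 2) ((2 * j - 1) / 2) [MOD 2] :=
      Choose.choose_modEq_choose_mod_mul_choose_div_nat (p := 2)
    rcases Nat.even_or_odd j with he | ho
    · -- j even: n part recurses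
      obtain ⟨j', rfl⟩ := he
      have h1' : 1 ≤ j' := by omega
      have h2' : j' < 2 ^ n := by
        have : 2 ^ (n+1) = 2 * 2 ^ n := by ring
        omega
      have e1 : (2 ^ (n+1) - 1 + (j' + j')) % 2 = 1 := by
        have : 2 ^ (n+1) = 2 * 2 ^ n := by ring
        omega
      have e2 : (2 * (j' + j') - 1) % 2 = 1 := by omega
      have e3 : (2 ^ (n+1) - 1 + (j' + j')) / 2 = 2 ^ n - 1 + j' := by
        have : 2 ^ (n+1) = 2 * 2 ^ n := by ring
        omega
      have e4 : (2 * (j' + j') - 1) / 2 = 2 * j' - 1 := by omega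
      rw [e1, e2, e3, e4, Nat.choose_one_right, one_mul] at hmod
      exact (Nat.modEq_zero_iff_dvd).mp
        (hmod.trans ((Nat.modEq_zero_iff_dvd).mpr (ih j' h1' h2')))
    · -- j odd: bottom digit 1, top digit 0
      obtain ⟨j', rfl⟩ := ho
      have e1 : (2 ^ (n+1) - 1 + (2 * j' + 1)) % 2 = 0 := by
        have : 2 ^ (n+1) = 2 * 2 ^ n := by ring
        omega
      have e2 : (2 * (2 * j' + 1) - 1) % 2 = 1 := by omega
      rw [e1, e2, show Nat.choose 0 1 = 0 from rfl, zero_mul] at hmod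
      exact (Nat.modEq_zero_iff_dvd).mp hmod

/-- If `m < 2^ℓ`, then `Σ_{j=1}^m c_j C(2^ℓ - 1 + j, 2j - 1)` is even, so a weighted
graph of `J(2k,k)` supported on classes `0,…,m` cannot have perfect state transfer. -/
theorem stmt_9 (ℓ m : ℕ) (hℓ : 1 ≤ ℓ) (hm : m < 2 ^ ℓ) (c : ℕ → ℤ) :
    Even (∑ j ∈ Finset.Icc 1 m,
      c j * (Nat.choose (2 ^ ℓ - 1 + j) (2 * j - 1) : ℤ)) := by
  rw [even_iff_two_dvd]
  apply Finset.dvd_sum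
  intro j hj
  simp only [Finset.mem_Icc] at hj
  have := key_even ℓ j hj.1 (lt_of_le_of_lt hj.2 hm)
  exact Dvd.dvd.mul_left (by exact_mod_cast Int.natCast_dvd_natCast.mpr this) _
end

section
/- Let ℓ be a natural number, let j be a natural number with 1 ≤ j ≤ 2^ℓ, and let x be a natural number with j − 1 ≤ x ≤ 2^{ℓ+1} − 1 − j. Then the 2-adic valuation of C(x+j, 2j−1) equals the 2-adic valuation of C(2^{ℓ+1} − 2 − x + j, 2j − 1). In particular, C(x+j, 2j−1) and C(2^{ℓ+1} − 2 − x + j, 2j − 1) have the same parity. -/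
/-- Sum of binary digits of `2*q+r` for `r < 2`. -/
lemma sum_digits_two_mul_add (q r : ℕ) (hr : r < 2) :
    (Nat.digits 2 (2 * q + r)).sum = r + (Nat.digits 2 q).sum := by
  rcases Nat.eq_zero_or_pos (2 * q + r) with h | h
  · have hq : q = 0 := by omega
    have hr0 : r = 0 := by omega
    simp [hq, hr0]
  · rw [Nat.digits_def' (by norm_num : 1 < 2) h]
    have h1 : (2 * q + r) % 2 = r := by omega
    have h2 : (2 * q + r) / 2 = q := by omega
    rw [h1, h2, List.sum_cons]

lemma sum_digits_add_le_aux : ∀ n a b : ℕ, a + b ≤ n →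
    (Nat.digits 2 (a + b)).sum ≤ (Nat.digits 2 a).sum + (Nat.digits 2 b).sum := by
  intro n
  induction n with
  | zero =>
    intro a b h
    have h0 : a = 0 ∧ b = 0 := by omega
    simp [h0.1, h0.2]
  | succ n ih =>
    intro a b h
    rcases Nat.eq_zero_or_pos (a + b) with h0 | h0
    · have : a = 0 ∧ b = 0 := by omega
      simp [this.1, this.2]
    have ha := sum_digits_two_mul_add (a / 2) (a % 2) (Nat.mod_lt _ (by norm_num))
    have hb := sum_digits_two_mul_add (b / 2) (b % 2) (Nat.mod_lt _ (by norm_num))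
    rw [Nat.div_add_mod] at ha hb
    rcases Nat.lt_or_ge (a % 2 + b % 2) 2 with hc | hc
    · have hab : a + b = 2 * (a / 2 + b / 2) + (a % 2 + b % 2) := by omega
      rw [hab, sum_digits_two_mul_add _ _ hc]
      have h1 := ih (a / 2) (b / 2) (by omega)
      omega
    · have hab : a + b = 2 * (a / 2 + b / 2 + 1) + 0 := by omega
      rw [hab, sum_digits_two_mul_add _ _ (by norm_num)]
      have h1 := ih (a / 2 + b / 2) 1 (by omega)
      have h2 := ih (a / 2) (b / 2) (by omega)
      have h3 : (Nat.digits 2 1).sum = 1 := by norm_num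
      omega

/-- Subadditivity of the binary digit sum. -/
lemma sum_digits_add_le (a b : ℕ) :
    (Nat.digits 2 (a + b)).sum ≤ (Nat.digits 2 a).sum + (Nat.digits 2 b).sum :=
  sum_digits_add_le_aux (a + b) a b le_rfl

/-- Complement identity: for `m < 2^t`, the binary digit sums of `m` and
`2^t - 1 - m` add up to `t`. -/
lemma sum_digits_complement (t : ℕ) : ∀ m < 2 ^ t,
    (Nat.digits 2 m).sum + (Nat.digits 2 (2 ^ t - 1 - m)).sum = t := by
  induction t with
  | zero => intro m hm; interval_cases m; simp
  | succ t ih =>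
    intro m hm
    have hq : m / 2 < 2 ^ t := by
      have h2pow : (2:ℕ) ^ (t + 1) = 2 * 2 ^ t := by rw [pow_succ]; ring
      omega
    have h1 := sum_digits_two_mul_add (m / 2) (m % 2) (Nat.mod_lt _ (by norm_num))
    rw [Nat.div_add_mod] at h1
    have h2pow : (2:ℕ) ^ (t + 1) = 2 * 2 ^ t := by rw [pow_succ]; ring
    have hpos : 1 ≤ (2:ℕ) ^ t := Nat.one_le_two_pow
    have h2 : 2 ^ (t + 1) - 1 - m = 2 * (2 ^ t - 1 - m / 2) + (1 - m % 2) := by omega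
    rw [h2, sum_digits_two_mul_add _ _ (by omega)]
    have h3 := ih (m / 2) hq
    omega

/-- Reflecting `n` about `N - 1` (for `N = 2^t`) preserves the 2-adic valuation of the
binomial coefficient `C(n, k)`. -/
lemma padicValNat_choose_reflect (t n n' k : ℕ) (hkn : k ≤ n) (hnN : n ≤ 2 ^ t - 1)
    (hn'eq : n' = 2 ^ t - 1 - (n - k)) :
    padicValNat 2 (Nat.choose n k) = padicValNat 2 (Nat.choose n' k) := by
  have hpos : 1 ≤ (2:ℕ) ^ t := Nat.one_le_two_pow
  have hkn' : k ≤ n' := by omega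
  have hn'k : n' - k = 2 ^ t - 1 - n := by omega
  haveI : Fact (Nat.Prime 2) := ⟨Nat.prime_two⟩
  have e1 := sub_one_mul_padicValNat_choose_eq_sub_sum_digits (p := 2) hkn
  have e2 := sub_one_mul_padicValNat_choose_eq_sub_sum_digits (p := 2) hkn'
  norm_num at e1 e2
  rw [hn'k] at e2
  have c1 := sum_digits_complement t n (by omega)
  have c2 := sum_digits_complement t (n - k) (by omega)
  rw [← hn'eq] at c2
  have s1 : (Nat.digits 2 n).sum ≤ (Nat.digits 2 k).sum + (Nat.digits 2 (n - k)).sum := by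
    have h := sum_digits_add_le k (n - k)
    rwa [Nat.add_sub_cancel' hkn] at h
  have s2 : (Nat.digits 2 n').sum ≤
      (Nat.digits 2 k).sum + (Nat.digits 2 (2 ^ t - 1 - n)).sum := by
    have h := sum_digits_add_le k (2 ^ t - 1 - n)
    rwa [show k + (2 ^ t - 1 - n) = n' by omega] at h
  omega

/-- Reflecting `x` about `2^ℓ - 1` preserves the 2-adic valuation (and hence the parity)
of `C(x+j, 2j-1)`, for `1 ≤ j ≤ 2^ℓ` and `j - 1 ≤ x ≤ 2^{ℓ+1} - 1 - j`. -/
theorem stmt_10 (ℓ j x : ℕ) (hj1 : 1 ≤ j) (hj2 : j ≤ 2 ^ ℓ)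
    (hx1 : j - 1 ≤ x) (hx2 : x ≤ 2 ^ (ℓ + 1) - 1 - j) :
    padicValNat 2 (Nat.choose (x + j) (2 * j - 1)) =
        padicValNat 2 (Nat.choose (2 ^ (ℓ + 1) - 2 - x + j) (2 * j - 1)) ∧
      (Even (Nat.choose (x + j) (2 * j - 1)) ↔
        Even (Nat.choose (2 ^ (ℓ + 1) - 2 - x + j) (2 * j - 1))) := by
  have hpow : (2:ℕ) ^ (ℓ + 1) = 2 * 2 ^ ℓ := by rw [pow_succ]; ring
  have hpos : 1 ≤ (2:ℕ) ^ ℓ := Nat.one_le_two_pow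
  have hkn : 2 * j - 1 ≤ x + j := by omega
  have hkn' : 2 * j - 1 ≤ 2 ^ (ℓ + 1) - 2 - x + j := by omega
  have hval := padicValNat_choose_reflect (ℓ + 1) (x + j) (2 ^ (ℓ + 1) - 2 - x + j)
    (2 * j - 1) hkn (by omega) (by omega)
  haveI : Fact (Nat.Prime 2) := ⟨Nat.prime_two⟩
  refine ⟨hval, ?_⟩
  have key : ∀ m : ℕ, m ≠ 0 → (Even m ↔ padicValNat 2 m ≠ 0) := by
    intro m hm
    rw [even_iff_two_dvd]
    exact dvd_iff_padicValNat_ne_zero hm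
  rw [key _ (Nat.choose_pos hkn).ne', key _ (Nat.choose_pos hkn').ne', hval]
end

section
/- Let a and x be natural numbers. Then the binomial coefficient C(x + 2^a, 2^{a+1} − 1) is odd if and only if 2^{a+1} divides x + 2^a + 1 (equivalently, if and only if the 2-adic valuation of x + 1 equals a). -/
private lemma key_lucas : ∀ a x : ℕ,
    Odd (Nat.choose (x + 2 ^ a) (2 ^ (a + 1) - 1)) ↔ 2 ^ (a + 1) ∣ (x + 2 ^ a + 1) := by
  intro a
  induction a with
  | zero =>
    intro x
    norm_num [Nat.choose_one_right, Nat.odd_iff]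
    omega
  | succ a ih =>
    intro x
    haveI : Fact (Nat.Prime 2) := ⟨Nat.prime_two⟩
    have hm := @Choose.choose_modEq_choose_mod_mul_choose_div_nat (x + 2 ^ (a + 1))
      (2 ^ (a + 2) - 1) 2 _
    have h1 : (1:ℕ) ≤ 2 ^ (a + 1) := Nat.one_le_two_pow
    have h1' : (1:ℕ) ≤ 2 ^ a := Nat.one_le_two_pow
    have hpp : 2 ^ (a + 2) = 2 * 2 ^ (a + 1) := by ring
    have hpp' : 2 ^ (a + 1) = 2 * 2 ^ a := by ring
    have hk1 : (2 ^ (a + 2) - 1) % 2 = 1 := by omega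
    have hk2 : (2 ^ (a + 2) - 1) / 2 = 2 ^ (a + 1) - 1 := by omega
    rw [hk1, hk2] at hm
    have hmod : Nat.choose (x + 2 ^ (a + 1)) (2 ^ (a + 2) - 1) % 2 =
        (Nat.choose ((x + 2 ^ (a + 1)) % 2) 1 *
          Nat.choose ((x + 2 ^ (a + 1)) / 2) (2 ^ (a + 1) - 1)) % 2 := hm
    rcases Nat.even_or_odd x with hx | hx
    · -- x even: both sides false
      obtain ⟨y, hy⟩ := hx
      have hpar : (x + 2 ^ (a + 1)) % 2 = 0 := by omega
      rw [hpar] at hmod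
      simp only [Nat.choose, Nat.zero_mul, Nat.choose_zero_right] at hmod
      constructor
      · intro h
        rw [Nat.odd_iff, hmod] at h
        simp at h
      · intro h
        exfalso
        have h2 : 2 ∣ 2 ^ (a + 2) := dvd_pow_self 2 (by omega)
        have hdd := (h2.trans h : 2 ∣ x + 2 ^ (a + 1) + 1)
        rw [show a + 1 + 1 = a + 2 from rfl] at h
        obtain ⟨c, hc⟩ := hdd
        omega
    · obtain ⟨y, hy⟩ := hx
      have hpar : (x + 2 ^ (a + 1)) % 2 = 1 := by omega
      have hdiv : (x + 2 ^ (a + 1)) / 2 = y + 2 ^ a := by omega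
      rw [hpar, hdiv] at hmod
      rw [Nat.choose_one_right] at hmod
      have hodd : Odd (Nat.choose (x + 2 ^ (a + 1)) (2 ^ (a + 2) - 1)) ↔
          Odd (Nat.choose (y + 2 ^ a) (2 ^ (a + 1) - 1)) := by
        rw [Nat.odd_iff, Nat.odd_iff, hmod, one_mul]
      rw [hodd, ih y]
      constructor
      · rintro ⟨c, hc⟩
        refine ⟨c, ?_⟩
        have he : 2 ^ (a + 1 + 1) * c = 2 * (2 ^ (a + 1) * c) := by ring
        omega
      · rintro ⟨c, hc⟩
        refine ⟨c, ?_⟩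
        have he : 2 ^ (a + 1 + 1) * c = 2 * (2 ^ (a + 1) * c) := by ring
        omega

private lemma key_val (a x : ℕ) :
    2 ^ (a + 1) ∣ (x + 2 ^ a + 1) ↔ padicValNat 2 (x + 1) = a := by
  haveI : Fact (Nat.Prime 2) := ⟨Nat.prime_two⟩
  have hx0 : x + 1 ≠ 0 := by omega
  have hlt : (2:ℕ) ^ a < 2 ^ (a + 1) := Nat.pow_lt_pow_right one_lt_two (Nat.lt_succ_self a)
  constructor
  · intro h
    have hsplit : 2 ^ a ∣ x + 1 := by
      have hh := Nat.dvd_sub ((pow_dvd_pow 2 a.le_succ).trans h) (dvd_refl (2 ^ a))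
      have he : x + 2 ^ a + 1 - 2 ^ a = x + 1 := by omega
      rwa [he] at hh
    have hnd : ¬ 2 ^ (a + 1) ∣ x + 1 := by
      intro hd
      have hh := Nat.dvd_sub h hd
      have he : x + 2 ^ a + 1 - (x + 1) = 2 ^ a := by omega
      rw [he] at hh
      exact absurd (Nat.le_of_dvd (Nat.pos_of_ne_zero (by positivity)) hh) (by omega)
    have hle : a ≤ padicValNat 2 (x + 1) := (padicValNat_dvd_iff_le hx0).mp hsplit
    have hub : padicValNat 2 (x + 1) < a + 1 := by
      by_contra hcon
      push_neg at hcon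
      exact hnd ((pow_dvd_pow 2 hcon).trans pow_padicValNat_dvd)
    omega
  · intro h
    have hpa : 2 ^ a ∣ x + 1 := h ▸ pow_padicValNat_dvd
    obtain ⟨m, hm⟩ := hpa
    have hnd : ¬ 2 ^ (a + 1) ∣ x + 1 := h ▸ pow_succ_padicValNat_not_dvd (by omega)
    have hmodd : m % 2 = 1 := by
      rcases Nat.even_or_odd m with ⟨c, hc⟩ | hme
      · exact absurd ⟨c, by rw [hm, hc]; ring⟩ hnd
      · exact Nat.odd_iff.mp hme
    obtain ⟨c, hc⟩ : 2 ∣ m + 1 := by omega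
    refine ⟨c, ?_⟩
    have h1' : (1:ℕ) ≤ 2 ^ a := Nat.one_le_two_pow
    have he : 2 ^ a * (m + 1) = 2 ^ a * m + 2 ^ a := by ring
    rw [show x + 2 ^ a + 1 = 2 ^ a * (m + 1) by omega, hc, pow_succ]
    ring

/-- `C(x + 2^a, 2^{a+1} - 1)` is odd iff `2^{a+1}` divides `x + 2^a + 1`, equivalently
iff `ν₂(x+1) = a`. -/
theorem stmt_11 (a x : ℕ) :
    (Odd (Nat.choose (x + 2 ^ a) (2 ^ (a + 1) - 1)) ↔ 2 ^ (a + 1) ∣ (x + 2 ^ a + 1)) ∧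
      (Odd (Nat.choose (x + 2 ^ a) (2 ^ (a + 1) - 1)) ↔ padicValNat 2 (x + 1) = a) := by
  exact ⟨key_lucas a x, (key_lucas a x).trans (key_val a x)⟩
end

section
/- Let ℓ be a natural number and let x be a natural number with 0 ≤ x ≤ 2^{ℓ+1} − 2. Then the sum Σ_{a=0}^{ℓ} C(x + 2^a, 2^{a+1} − 1) is odd; moreover there is exactly one a ∈ {0, 1, …, ℓ} for which the term C(x + 2^a, 2^{a+1} − 1) is odd, namely a = ν₂(x+1). -/
theorem odd_choose_pow_pred (b : ℕ) : ∀ n : ℕ,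
    Odd (Nat.choose n (2 ^ b - 1)) ↔ n % 2 ^ b = 2 ^ b - 1 := by
  induction b with
  | zero => simp [Nat.mod_one]
  | succ b ih =>
    intro n
    have inst : Fact (Nat.Prime 2) := ⟨Nat.prime_two⟩
    have key := Choose.choose_modEq_choose_mod_mul_choose_div_nat
      (p := 2) (n := n) (k := 2 ^ (b+1) - 1)
    have h1 : (1:ℕ) ≤ 2 ^ b := Nat.one_le_two_pow
    have h2 : (2:ℕ) ^ (b+1) = 2 * 2 ^ b := by ring
    have hk1 : (2 ^ (b+1) - 1) % 2 = 1 := by omega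
    have hk2 : (2 ^ (b+1) - 1) / 2 = 2 ^ b - 1 := by omega
    rw [hk1, hk2] at key
    rw [Nat.odd_iff, key, ← Nat.odd_iff, Nat.odd_mul, Nat.choose_one_right, ih,
      Nat.odd_iff, h2, Nat.mod_mul]
    have := Nat.mod_lt (n / 2) (show 0 < 2 ^ b by omega)
    omega

theorem key_iff (x a : ℕ) :
    Odd (Nat.choose (x + 2 ^ a) (2 ^ (a + 1) - 1)) ↔ a = padicValNat 2 (x + 1) := by
  set v := padicValNat 2 (x + 1) with hv
  have hdvd : 2 ^ v ∣ x + 1 := pow_padicValNat_dvd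
  obtain ⟨m, hm⟩ := hdvd
  have hmodd : Odd m := by
    rcases Nat.even_or_odd m with he | ho
    · exfalso
      obtain ⟨t, ht⟩ := he
      have hd : 2 ^ (v + 1) ∣ x + 1 := ⟨t, by rw [hm, ht]; ring⟩
      have inst : Fact (Nat.Prime 2) := ⟨Nat.prime_two⟩
      have hle := (padicValNat_dvd_iff_le (p := 2) (n := v + 1) (show x + 1 ≠ 0 by omega)).mp hd
      omega
    · exact ho
  rw [odd_choose_pow_pred]
  have h1a : (1:ℕ) ≤ 2 ^ (a+1) := Nat.one_le_two_pow
  have hiff : (x + 2 ^ a) % 2 ^ (a+1) = 2 ^ (a+1) - 1 ↔ 2 ^ (a+1) ∣ x + 2 ^ a + 1 := by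
    constructor
    · intro h
      have h3 := Nat.div_add_mod (x + 2 ^ a) (2 ^ (a+1))
      refine ⟨(x + 2 ^ a) / 2 ^ (a+1) + 1, ?_⟩
      have h4 : 2 ^ (a+1) * ((x + 2 ^ a) / 2 ^ (a+1) + 1)
          = 2 ^ (a+1) * ((x + 2 ^ a) / 2 ^ (a+1)) + 2 ^ (a+1) := by ring
      omega
    · rintro ⟨t, ht⟩
      have ht1 : 1 ≤ t := by nlinarith [Nat.one_le_two_pow (n := a)]
      have h5 : 2 ^ (a+1) * t = 2 ^ (a+1) * (t-1) + 2 ^ (a+1) := by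
        rw [← Nat.mul_succ]; congr 1; omega
      have h6 : x + 2 ^ a = 2 ^ (a+1) * (t - 1) + (2 ^ (a+1) - 1) := by omega
      rw [h6, Nat.mul_add_mod, Nat.mod_eq_of_lt (by omega)]
  rw [hiff]
  obtain ⟨k, hk⟩ := hmodd
  constructor
  · rintro ⟨t, ht⟩
    have hx1 : 2 ^ v * m + 2 ^ a = 2 ^ (a+1) * t := by omega
    by_contra hne
    rcases Nat.lt_or_ge a v with hav | hav
    · have he : 2 ^ a * (2 ^ (v - a) * m + 1) = 2 ^ a * (2 * t) := by
        calc 2 ^ a * (2 ^ (v - a) * m + 1) = 2 ^ a * 2 ^ (v - a) * m + 2 ^ a := by ring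
        _ = 2 ^ v * m + 2 ^ a := by rw [← pow_add, Nat.add_sub_cancel' (le_of_lt hav)]
        _ = 2 ^ (a+1) * t := hx1
        _ = 2 ^ a * (2 * t) := by rw [pow_succ]; ring
      have he2 : 2 ^ (v - a) * m + 1 = 2 * t :=
        Nat.eq_of_mul_eq_mul_left (Nat.pos_of_ne_zero (by positivity)) he
      have hdv : 2 ∣ 2 ^ (v - a) * m := Dvd.dvd.mul_right (dvd_pow_self 2 (by omega)) m
      omega
    · have hva : v < a := by omega
      have he : 2 ^ v * (m + 2 ^ (a - v)) = 2 ^ v * (2 * (2 ^ (a - v) * t)) := by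
        calc 2 ^ v * (m + 2 ^ (a - v)) = 2 ^ v * m + 2 ^ v * 2 ^ (a - v) := by ring
        _ = 2 ^ v * m + 2 ^ a := by rw [← pow_add, Nat.add_sub_cancel' hav]
        _ = 2 ^ (a+1) * t := hx1
        _ = 2 ^ v * (2 * (2 ^ (a - v) * t)) := by
            rw [show 2 ^ (a+1) = 2 ^ v * (2 * 2 ^ (a - v)) by
              rw [← pow_succ', ← pow_add]; congr 1; omega]
            ring
      have he2 : m + 2 ^ (a - v) = 2 * (2 ^ (a - v) * t) :=
        Nat.eq_of_mul_eq_mul_left (Nat.pos_of_ne_zero (by positivity)) he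
      have hdv : 2 ∣ 2 ^ (a - v) := dvd_pow_self 2 (by omega)
      omega
  · rintro rfl
    refine ⟨k + 1, ?_⟩
    have : x + 2 ^ v + 1 = 2 ^ v * m + 2 ^ v := by omega
    rw [this, hk, pow_succ]; ring

/-- For `0 ≤ x ≤ 2^{ℓ+1} - 2`, the sum `Σ_{a=0}^{ℓ} C(x + 2^a, 2^{a+1} - 1)` is odd;
moreover exactly one term is odd, namely the one with `a = ν₂(x+1)`. -/
theorem stmt_12 (ℓ x : ℕ) (hx : x ≤ 2 ^ (ℓ + 1) - 2) :
    Odd (∑ a ∈ Finset.range (ℓ + 1), Nat.choose (x + 2 ^ a) (2 ^ (a + 1) - 1)) ∧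
      (∀ a ≤ ℓ, Odd (Nat.choose (x + 2 ^ a) (2 ^ (a + 1) - 1)) ↔
        a = padicValNat 2 (x + 1)) := by
  set v := padicValNat 2 (x + 1) with hv
  have hvle : v ≤ ℓ := by
    have hdvd : 2 ^ v ∣ x + 1 := pow_padicValNat_dvd
    by_contra h
    have hd2 : 2 ^ (ℓ + 1) ∣ 2 ^ v := pow_dvd_pow 2 (by omega)
    have h2 : 2 ^ (ℓ + 1) ∣ x + 1 := hd2.trans hdvd
    have h3 := Nat.le_of_dvd (by omega) h2
    have h4 : (1:ℕ) ≤ 2 ^ (ℓ + 1) := Nat.one_le_two_pow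
    omega
  constructor
  · rw [Nat.odd_iff, Finset.sum_nat_mod]
    have heq : ∀ a ∈ Finset.range (ℓ + 1),
        Nat.choose (x + 2 ^ a) (2 ^ (a + 1) - 1) % 2 = if a = v then 1 else 0 := by
      intro a _
      by_cases h : a = v
      · subst h
        rw [if_pos rfl, ← Nat.odd_iff]
        exact (key_iff x v).mpr rfl
      · rw [if_neg h]
        have h2 := (key_iff x a).not.mpr h
        rw [Nat.odd_iff] at h2
        omega
    rw [Finset.sum_congr rfl heq, Finset.sum_ite_eq' (Finset.range (ℓ + 1)) v]
    simp [Finset.mem_range, Nat.lt_succ_iff.mpr hvle]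
  · intro a _
    exact key_iff x a
end

section
/- Let ℓ, m, k be natural numbers with 2^ℓ ≤ m ≤ k < 2^{ℓ+1}, and let c_1, …, c_m be integers. Then the integer Σ_{j=1}^{m} c_j · C(x+j, 2j−1) is odd for every x ∈ {0, 1, …, k−1} if and only if, for every j ∈ {1, …, m}, c_j is odd exactly when j is a power of 2 (i.e. j ∈ {2^0, 2^1, …, 2^ℓ}). -/
/-- Parity of `C(n, 2^e - 1)`: it is odd iff `2^e ∣ n + 1`. -/
lemma choose_two_pow_sub_one_mod_two (e : ℕ) : ∀ n : ℕ,
    Nat.choose n (2 ^ e - 1) % 2 = if 2 ^ e ∣ n + 1 then 1 else 0 := by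
  induction e with
  | zero => intro n; simp
  | succ e ih =>
    intro n
    haveI : Fact (Nat.Prime 2) := ⟨Nat.prime_two⟩
    have lucas := @Choose.choose_modEq_choose_mod_mul_choose_div_nat n (2 ^ (e + 1) - 1) 2 _
    have ht : (1 : ℕ) ≤ 2 ^ e := Nat.one_le_two_pow
    have hps : 2 ^ (e + 1) = 2 * 2 ^ e := by rw [pow_succ]; ring
    have hk1 : (2 ^ (e + 1) - 1) % 2 = 1 := by omega
    have hk2 : (2 ^ (e + 1) - 1) / 2 = 2 ^ e - 1 := by omega
    rw [Nat.ModEq] at lucas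
    rw [hk1, hk2] at lucas
    rcases Nat.mod_two_eq_zero_or_one n with hn | hn
    · rw [lucas, hn]
      have hnd : ¬ 2 ^ (e + 1) ∣ n + 1 := by
        intro hdvd
        have h2 : 2 ∣ n + 1 := dvd_trans (dvd_pow_self 2 (Nat.succ_ne_zero e)) hdvd
        omega
      rw [if_neg hnd]
      simp
    · rw [lucas, hn]
      have hq : n = 2 * (n / 2) + 1 := by omega
      have hiff : 2 ^ (e + 1) ∣ n + 1 ↔ 2 ^ e ∣ n / 2 + 1 := by
        have : n + 1 = 2 * (n / 2 + 1) := by omega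
        rw [this, hps, mul_dvd_mul_iff_left (two_ne_zero)]
      simp only [hiff, Nat.choose_self, one_mul]
      exact ih (n / 2)

/-- `2^(a+1) ∣ N + 2^a` iff `a` is the 2-adic valuation of `N` (for `N ≠ 0`). -/
lemma dvd_add_pow_iff (N a : ℕ) (hN : N ≠ 0) :
    2 ^ (a + 1) ∣ N + 2 ^ a ↔ a = N.factorization 2 := by
  have step : 2 ^ (a + 1) ∣ N + 2 ^ a ↔ (2 ^ a ∣ N ∧ ¬ 2 ^ (a + 1) ∣ N) := by
    constructor
    · intro h
      have ha : 2 ^ a ∣ N + 2 ^ a := dvd_trans (pow_dvd_pow 2 (Nat.le_succ a)) h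
      have haN : 2 ^ a ∣ N := (Nat.dvd_add_right (dvd_refl _)).mp (by rwa [add_comm] at ha)
      obtain ⟨q, hq⟩ := haN
      constructor
      · exact ⟨q, hq⟩
      · intro h2
        have h1 : 2 ^ a * 2 ∣ 2 ^ a * (q + 1) := by
          rw [← pow_succ]
          have : N + 2 ^ a = 2 ^ a * (q + 1) := by rw [hq]; ring
          rwa [this] at h
        have h2' : 2 ^ a * 2 ∣ 2 ^ a * q := by rw [← pow_succ, ← hq]; exact h2
        have e1 : 2 ∣ q + 1 := (mul_dvd_mul_iff_left (pow_ne_zero a two_ne_zero)).mp h1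
        have e2 : 2 ∣ q := (mul_dvd_mul_iff_left (pow_ne_zero a two_ne_zero)).mp h2'
        omega
    · rintro ⟨⟨q, hq⟩, h2⟩
      have e2 : ¬ 2 ∣ q := by
        intro hdq
        exact h2 (by rw [hq, pow_succ]; exact mul_dvd_mul (dvd_refl _) hdq)
      have : N + 2 ^ a = 2 ^ a * (q + 1) := by rw [hq]; ring
      rw [this, pow_succ]
      exact mul_dvd_mul (dvd_refl _) (by omega)
  rw [step, Nat.Prime.pow_dvd_iff_le_factorization Nat.prime_two hN,
    Nat.Prime.pow_dvd_iff_le_factorization Nat.prime_two hN]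
  omega

open Classical in
/-- The key sum identity: the sum of `C(x+2^a, 2^(a+1)-1)` over powers of two `2^a ≤ m`
is odd, whenever `2^ℓ ≤ m < 2^(ℓ+1)` and `x + 1 < 2^(ℓ+1)`. -/
lemma keysum (ℓ m x : ℕ) (h1 : 2 ^ ℓ ≤ m) (hm : m < 2 ^ (ℓ + 1)) (hx : x + 1 < 2 ^ (ℓ + 1)) :
    (∑ j ∈ Finset.Icc 1 m,
      (if ∃ a : ℕ, j = 2 ^ a then ((Nat.choose (x + j) (2 * j - 1) : ZMod 2)) else 0)) = 1 := by
  classical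
  have hfilter : (Finset.Icc 1 m).filter (fun j => ∃ a : ℕ, j = 2 ^ a)
      = (Finset.range (ℓ + 1)).image (fun a => 2 ^ a) := by
    ext j
    simp only [Finset.mem_filter, Finset.mem_Icc, Finset.mem_image, Finset.mem_range]
    constructor
    · rintro ⟨⟨hj1, hjm⟩, a, rfl⟩
      refine ⟨a, ?_, rfl⟩
      by_contra hcon
      have : 2 ^ (ℓ + 1) ≤ 2 ^ a := Nat.pow_le_pow_right (by norm_num) (by omega)
      omega
    · rintro ⟨a, ha, rfl⟩
      have hle : 2 ^ a ≤ 2 ^ ℓ := Nat.pow_le_pow_right (by norm_num) (by omega)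
      exact ⟨⟨Nat.one_le_two_pow, le_trans hle h1⟩, a, rfl⟩
  rw [← Finset.sum_filter, hfilter,
    Finset.sum_image (fun a _ b _ h => Nat.pow_right_injective (by norm_num) h)]
  set v := (x + 1).factorization 2 with hv
  have hterm : ∀ a : ℕ, ((Nat.choose (x + 2 ^ a) (2 * 2 ^ a - 1) : ZMod 2))
      = if a = v then 1 else 0 := by
    intro a
    have h2 : 2 * 2 ^ a - 1 = 2 ^ (a + 1) - 1 := by rw [pow_succ]; ring_nf
    have hmod := choose_two_pow_sub_one_mod_two (a + 1) (x + 2 ^ a)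
    have hdvd : 2 ^ (a + 1) ∣ x + 2 ^ a + 1 ↔ a = v := by
      rw [hv]
      have : x + 2 ^ a + 1 = (x + 1) + 2 ^ a := by ring
      rw [this]
      exact dvd_add_pow_iff (x + 1) a (by omega)
    have := ZMod.natCast_mod (Nat.choose (x + 2 ^ a) (2 ^ (a + 1) - 1)) 2
    rw [h2, ← this, hmod]
    split_ifs with hd hv' hv'
    · rfl
    · exact absurd (hdvd.mp hd) hv'
    · exact absurd (hdvd.mpr hv') hd
    · rfl
  rw [Finset.sum_congr rfl (fun a _ => hterm a), Finset.sum_ite_eq' (Finset.range (ℓ + 1)) v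
    (fun _ => (1 : ZMod 2))]
  have hvmem : v ∈ Finset.range (ℓ + 1) := by
    rw [Finset.mem_range]
    have hdvd : 2 ^ v ∣ x + 1 := Nat.ordProj_dvd (x + 1) 2
    have hle : 2 ^ v ≤ x + 1 := Nat.le_of_dvd (by omega) hdvd
    by_contra hcon
    have : 2 ^ (ℓ + 1) ≤ 2 ^ v := Nat.pow_le_pow_right (by norm_num) (by omega)
    omega
  rw [if_pos hvmem]

/-- An integer is odd iff it is `1` in `ZMod 2`. -/
lemma int_odd_iff_cast (z : ℤ) : Odd z ↔ (z : ZMod 2) = 1 := by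
  constructor
  · rintro ⟨t, rfl⟩
    push_cast
    rw [show ((2 : ZMod 2)) = 0 by decide, zero_mul, zero_add]
  · intro h
    rcases Int.even_or_odd z with he | ho
    · exfalso
      obtain ⟨t, rfl⟩ := he
      rw [Int.cast_add] at h
      have h2 : (t : ZMod 2) + (t : ZMod 2) = 0 := by
        have : ((2 : ℤ) : ZMod 2) = 0 := by decide
        calc (t : ZMod 2) + t = ((2 : ℤ) : ZMod 2) * t := by push_cast; ring
        _ = 0 := by rw [this, zero_mul]
      rw [h2] at h
      exact absurd h (by decide)
    · exact ho

/-- For `2^ℓ ≤ m ≤ k < 2^{ℓ+1}`, the integer `Σ_{j=1}^m c_j C(x+j, 2j-1)` is odd for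
every `x ∈ {0,…,k-1}` iff `c_j` is odd exactly when `j` is a power of `2`. -/
theorem stmt_13 (ℓ m k : ℕ) (h1 : 2 ^ ℓ ≤ m) (h2 : m ≤ k) (h3 : k < 2 ^ (ℓ + 1))
    (c : ℕ → ℤ) :
    (∀ x < k, Odd (∑ j ∈ Finset.Icc 1 m,
        c j * (Nat.choose (x + j) (2 * j - 1) : ℤ))) ↔
      (∀ j, 1 ≤ j → j ≤ m → (Odd (c j) ↔ ∃ a : ℕ, j = 2 ^ a)) := by
  classical
  have hm : m < 2 ^ (ℓ + 1) := lt_of_le_of_lt h2 h3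
  -- recast the sum condition in ZMod 2
  have hsum_cast : ∀ x : ℕ, (Odd (∑ j ∈ Finset.Icc 1 m,
      c j * (Nat.choose (x + j) (2 * j - 1) : ℤ))) ↔
      (∑ j ∈ Finset.Icc 1 m,
        ((c j : ZMod 2) * (Nat.choose (x + j) (2 * j - 1) : ZMod 2))) = 1 := by
    intro x
    rw [int_odd_iff_cast]
    constructor <;> intro h <;> [skip; skip] <;>
    · rw [← h]; push_cast; rfl
  constructor
  · -- forward direction: uniqueness via triangularity
    intro h
    have key : ∀ j, 1 ≤ j → j ≤ m →
        ((c j : ZMod 2) = if ∃ a : ℕ, j = 2 ^ a then 1 else 0) := by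
      intro j
      induction j using Nat.strong_induction_on with
      | _ j IH =>
        intro hj1 hjm
        have hxk : j - 1 < k := by omega
        have hs1 : (∑ i ∈ Finset.Icc 1 m,
            ((c i : ZMod 2) * (Nat.choose ((j - 1) + i) (2 * i - 1) : ZMod 2))) = 1 :=
          (hsum_cast (j - 1)).mp (h (j - 1) hxk)
        have hs2 : (∑ i ∈ Finset.Icc 1 m,
            (if ∃ a : ℕ, i = 2 ^ a then
              ((Nat.choose ((j - 1) + i) (2 * i - 1) : ZMod 2)) else 0)) = 1 :=
          keysum ℓ m (j - 1) h1 hm (by omega)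
        have hdiff : (∑ i ∈ Finset.Icc 1 m,
            (((c i : ZMod 2) - if ∃ a : ℕ, i = 2 ^ a then 1 else 0)
              * (Nat.choose ((j - 1) + i) (2 * i - 1) : ZMod 2))) = 0 := by
          have : ∀ i ∈ Finset.Icc 1 m,
              (((c i : ZMod 2) - if ∃ a : ℕ, i = 2 ^ a then 1 else 0)
                * (Nat.choose ((j - 1) + i) (2 * i - 1) : ZMod 2))
              = ((c i : ZMod 2) * (Nat.choose ((j - 1) + i) (2 * i - 1) : ZMod 2))
                - (if ∃ a : ℕ, i = 2 ^ a then
                    ((Nat.choose ((j - 1) + i) (2 * i - 1) : ZMod 2)) else 0) := by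
            intro i _
            split_ifs <;> ring
          rw [Finset.sum_congr rfl this, Finset.sum_sub_distrib, hs1, hs2, sub_self]
        have hsingle : (∑ i ∈ Finset.Icc 1 m,
            (((c i : ZMod 2) - if ∃ a : ℕ, i = 2 ^ a then 1 else 0)
              * (Nat.choose ((j - 1) + i) (2 * i - 1) : ZMod 2)))
            = ((c j : ZMod 2) - if ∃ a : ℕ, j = 2 ^ a then 1 else 0) := by
          rw [Finset.sum_eq_single_of_mem j (Finset.mem_Icc.mpr ⟨hj1, hjm⟩)]
          · have hjj : (j - 1) + j = 2 * j - 1 := by omega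
            rw [hjj, Nat.choose_self, Nat.cast_one, mul_one]
          · intro i hi hne
            rcases lt_or_gt_of_ne hne with hlt | hgt
            · have hmem := Finset.mem_Icc.mp hi
              rw [IH i hlt hmem.1 (le_trans hmem.2 (le_refl m)), sub_self, zero_mul]
            · have hz : Nat.choose ((j - 1) + i) (2 * i - 1) = 0 :=
                Nat.choose_eq_zero_of_lt (by omega)
              rw [hz, Nat.cast_zero, mul_zero]
        rw [hsingle] at hdiff
        have := sub_eq_zero.mp hdiff
        exact this
    intro j hj1 hjm
    rw [int_odd_iff_cast, key j hj1 hjm]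
    split_ifs with hp
    · simp [hp]
    · simp only [hp, iff_false]
      decide
  · -- backward direction: the explicit solution works
    intro hc x hx
    rw [hsum_cast]
    have hrw : ∀ j ∈ Finset.Icc 1 m,
        ((c j : ZMod 2) * (Nat.choose (x + j) (2 * j - 1) : ZMod 2))
        = (if ∃ a : ℕ, j = 2 ^ a then ((Nat.choose (x + j) (2 * j - 1) : ZMod 2)) else 0) := by
      intro j hj
      have hj' := Finset.mem_Icc.mp hj
      have hodd := hc j hj'.1 hj'.2
      split_ifs with hp
      · have : Odd (c j) := hodd.mpr hp
        rw [(int_odd_iff_cast (c j)).mp this, one_mul]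
      · have hne : ¬ Odd (c j) := fun ho => hp (hodd.mp ho)
        have heven : Even (c j) := Int.not_odd_iff_even.mp hne
        obtain ⟨t, ht⟩ := heven
        have : (c j : ZMod 2) = 0 := by
          rw [ht]
          push_cast
          have : ((2 : ℤ) : ZMod 2) = 0 := by decide
          calc (t : ZMod 2) + t = ((2 : ℤ) : ZMod 2) * t := by push_cast; ring
          _ = 0 := by rw [this, zero_mul]
        rw [this, zero_mul]
    rw [Finset.sum_congr rfl hrw]
    exact keysum ℓ m x h1 hm (by omega)
end

section
/- Let k ≥ 1 and m be natural numbers with 1 ≤ m ≤ k, let τ > 0 be real, and let w_0, w_1, …, w_m be real numbers. Define f : ℕ → ℝ by f(x) = Σ_{r=0}^{m} w_r · Σ_{j=0}^{r} (−1)^{r−j} · C(2j,j) · C(k−j, r−j) · C(x+j, 2j). Then the following are equivalent: (1) for every x ∈ {0, 1, …, k−1} there exists an odd integer z_x with τ·(f(x+1) − f(x)) = z_x · π; (2) m ≥ 2^{⌊log₂ k⌋} and there exist integers c_1, …, c_m such that c_j is odd if and only if j is a power of 2 (for j = 1, …, m), and for every r ∈ {1, …, m}, w_r = (π/τ) ·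 Σ_{j=r}^{m} (c_j / C(2j,j)) · C(k−r, j−r). -/
/-!
Put `γ_j = johnsonCoeff k m w j = C(2j,j) Σ_{s=j}^m (-1)^(s-j) C(k-j,s-j) w_s`. Exchanging the
sums gives `f(x) = Σ_j γ_j C(x+j,2j)`, and binomial inversion recovers the weights as
`w_r = Σ_{j≥r} γ_j / C(2j,j) · C(k-r,j-r)`, so the formula for `w` in (2) says exactly that
`τ γ_j / π = c_j`. By Pascal's rule `f(x+1) - f(x) = Σ_{j≥1} γ_j C(x+j,2j-1)`, a
unitriangular system in `x = 0, …, m-1` (at `x = j-1` the `j`-th coefficient is `1` and the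
later ones vanish). Hence (1) forces the `τ γ_j / π` to be integers `c_j`, and modulo 2 it
determines their parities. By Lucas' theorem `C(x+2^a, 2^(a+1)-1)` is odd exactly when `2^a` is the
largest power of `2` dividing `x+1`; so when `c_j` is odd precisely at powers of two, the
difference at `x` is an odd multiple of `π / τ` iff `2^(v₂(x+1)) ≤ m`, and over all `x < k`
this is `2^⌊log₂ k⌋ ≤ m`.
-/

open Finset

section BinomialInversion

variable {R : Type*} [CommRing R]

theorem sum_range_neg_one_pow_mul_choose_mul_choose (n d : ℕ) :
    ∑ t ∈ range (d + 1), (-1 : R) ^ t * (n.choose t : R) * ((n - t).choose (d - t) : R) =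
      if d = 0 then 1 else 0 := by
  have hfactor : ∀ t ∈ range (d + 1),
      (-1 : R) ^ t * (n.choose t : R) * ((n - t).choose (d - t) : R) =
        (n.choose d : R) * ((-1) ^ t * (d.choose t : R)) := by
    intro t ht
    have h := congrArg (Nat.cast : ℕ → R) (Nat.choose_mul (n := n) (mem_range_succ_iff.mp ht))
    push_cast at h
    linear_combination -(-1 : R) ^ t * h
  have halt := congrArg (Int.cast : ℤ → R) (Int.alternating_sum_range_choose (n := d))
  push_cast at halt
  rw [sum_congr rfl hfactor, ← mul_sum, halt]
  split_ifs with hd <;> simp [hd]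

theorem sum_Icc_neg_one_pow_mul_choose_mul_choose (k : ℕ) {r s : ℕ} (hrs : r ≤ s) :
    ∑ j ∈ Icc r s,
        (-1 : R) ^ (j - r) * ((k - r).choose (j - r) : R) * ((k - j).choose (s - j) : R) =
      if r = s then 1 else 0 := by
  rw [← Ico_add_one_right_eq_Icc, sum_Ico_eq_sum_range, show s + 1 - r = s - r + 1 by omega]
  have hshift : ∀ t ∈ range (s - r + 1),
      (-1 : R) ^ (r + t - r) * ((k - r).choose (r + t - r) : R) *
        ((k - (r + t)).choose (s - (r + t)) : R) =
      (-1 : R) ^ t * ((k - r).choose t : R) * ((k - r - t).choose (s - r - t) : R) := by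
    intro t _
    rw [Nat.add_sub_cancel_left, Nat.sub_sub, Nat.sub_sub]
  rw [sum_congr rfl hshift, sum_range_neg_one_pow_mul_choose_mul_choose]
  exact if_congr (by omega) rfl rfl

theorem sum_Icc_choose_mul_neg_one_pow_mul_choose (k : ℕ) {r s : ℕ} (hrs : r ≤ s) :
    ∑ j ∈ Icc r s,
        ((k - r).choose (j - r) : R) * ((-1) ^ (s - j) * ((k - j).choose (s - j) : R)) =
      if r = s then 1 else 0 := by
  have hsign : ∀ j ∈ Icc r s,
      ((k - r).choose (j - r) : R) * ((-1) ^ (s - j) * ((k - j).choose (s - j) : R)) =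
        (-1) ^ (s - r) *
          ((-1 : R) ^ (j - r) * ((k - r).choose (j - r) : R) * ((k - j).choose (s - j) : R)) := by
    intro j hj
    obtain ⟨hrj, hjs⟩ := mem_Icc.mp hj
    have hpow : (-1 : R) ^ (s - r) * (-1) ^ (j - r) = (-1) ^ (s - j) := by
      rw [← pow_add, show s - r + (j - r) = s - j + 2 * (j - r) by omega, pow_add, pow_mul,
        neg_one_sq, one_pow, mul_one]
    rw [← hpow]
    ring
  rw [sum_congr rfl hsign, ← mul_sum, sum_Icc_neg_one_pow_mul_choose_mul_choose k hrs]
  split_ifs with h <;> simp [h]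

theorem sum_Icc_mul_sum_Icc_of_orthogonal (K L : ℕ → ℕ → R)
    (hKL : ∀ r s, r ≤ s → ∑ j ∈ Icc r s, K r j * L j s = if r = s then 1 else 0)
    (u : ℕ → R) {r m : ℕ} (hrm : r ≤ m) :
    ∑ j ∈ Icc r m, K r j * ∑ s ∈ Icc j m, L j s * u s = u r := by
  calc ∑ j ∈ Icc r m, K r j * ∑ s ∈ Icc j m, L j s * u s
      = ∑ j ∈ Icc r m, ∑ s ∈ Icc j m, K r j * L j s * u s := by
        simp only [mul_sum, mul_assoc]
    _ = ∑ s ∈ Icc r m, ∑ j ∈ Icc r s, K r j * L j s * u s :=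
        sum_comm' fun j s => by simp only [mem_Icc]; omega
    _ = ∑ s ∈ Icc r m, if r = s then u s else 0 := by
        refine sum_congr rfl fun s hs => ?_
        rw [← sum_mul, hKL r s (mem_Icc.mp hs).1, ite_mul, one_mul, zero_mul]
    _ = u r := by rw [sum_ite_eq, if_pos (mem_Icc.mpr ⟨le_rfl, hrm⟩)]

theorem forall_eq_sum_choose_mul_iff (k a m : ℕ) (w v : ℕ → R) :
    (∀ r ∈ Icc a m, w r = ∑ j ∈ Icc r m, ((k - r).choose (j - r) : R) * v j) ↔
      ∀ j ∈ Icc a m,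
        v j = ∑ s ∈ Icc j m, (-1) ^ (s - j) * ((k - j).choose (s - j) : R) * w s := by
  constructor
  · intro hw j hj
    obtain ⟨haj, hjm⟩ := mem_Icc.mp hj
    rw [← sum_Icc_mul_sum_Icc_of_orthogonal
      (fun j s => (-1) ^ (s - j) * ((k - j).choose (s - j) : R))
      (fun s t => ((k - s).choose (t - s) : R))
      (fun _ _ => sum_Icc_neg_one_pow_mul_choose_mul_choose k) v hjm]
    refine sum_congr rfl fun s hs => ?_
    rw [hw s (mem_Icc.mpr ⟨haj.trans (mem_Icc.mp hs).1, (mem_Icc.mp hs).2⟩)]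
  · intro hv r hr
    obtain ⟨har, hrm⟩ := mem_Icc.mp hr
    rw [← sum_Icc_mul_sum_Icc_of_orthogonal (fun r j => ((k - r).choose (j - r) : R))
      (fun j s => (-1) ^ (s - j) * ((k - j).choose (s - j) : R))
      (fun _ _ => sum_Icc_choose_mul_neg_one_pow_mul_choose k) w hrm]
    refine sum_congr rfl fun j hj => ?_
    rw [hv j (mem_Icc.mpr ⟨har.trans (mem_Icc.mp hj).1, (mem_Icc.mp hj).2⟩)]

end BinomialInversion

section Eigenvalues

variable {R : Type*} [CommRing R]

def johnsonEigenvalue (k m : ℕ) (w : ℕ → R) (x : ℕ) : R :=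
  ∑ r ∈ range (m + 1), w r * ∑ j ∈ range (r + 1), (-1 : R) ^ (r - j) *
    ((2 * j).choose j : R) * ((k - j).choose (r - j) : R) * ((x + j).choose (2 * j) : R)

def johnsonCoeff (k m : ℕ) (w : ℕ → R) (j : ℕ) : R :=
  ((2 * j).choose j : R) * ∑ s ∈ Icc j m, (-1) ^ (s - j) * ((k - j).choose (s - j) : R) * w s

theorem johnsonEigenvalue_eq_sum_johnsonCoeff_mul (k m : ℕ) (w : ℕ → R) (x : ℕ) :
    johnsonEigenvalue k m w x =
      ∑ j ∈ range (m + 1), johnsonCoeff k m w j * ((x + j).choose (2 * j) : R) := by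
  unfold johnsonEigenvalue johnsonCoeff
  calc _ = ∑ r ∈ range (m + 1), ∑ j ∈ range (r + 1), ((2 * j).choose j : R) *
        ((-1) ^ (r - j) * ((k - j).choose (r - j) : R) * w r) * ((x + j).choose (2 * j) : R) := by
        refine sum_congr rfl fun r _ => ?_
        rw [mul_sum]
        exact sum_congr rfl fun j _ => by ring
    _ = ∑ j ∈ range (m + 1), ∑ r ∈ Icc j m, ((2 * j).choose j : R) *
        ((-1) ^ (r - j) * ((k - j).choose (r - j) : R) * w r) * ((x + j).choose (2 * j) : R) :=
        sum_comm' fun r j => by simp only [mem_range, mem_Icc]; omega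
    _ = _ := by simp only [mul_sum, sum_mul]

theorem johnsonEigenvalue_succ_sub (k m : ℕ) (w : ℕ → R) (x : ℕ) :
    johnsonEigenvalue k m w (x + 1) - johnsonEigenvalue k m w x =
      ∑ j ∈ Icc 1 m, ((x + j).choose (2 * j - 1) : R) * johnsonCoeff k m w j := by
  rw [johnsonEigenvalue_eq_sum_johnsonCoeff_mul, johnsonEigenvalue_eq_sum_johnsonCoeff_mul,
    ← sum_sub_distrib, sum_range_succ', ← Ico_add_one_right_eq_Icc, sum_Ico_eq_sum_range,
    Nat.add_sub_cancel]
  simp only [mul_zero, add_zero, Nat.choose_zero_right, sub_self]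
  refine sum_congr rfl fun i _ => ?_
  rw [add_comm 1 i, show x + 1 + (i + 1) = x + (i + 1) + 1 by omega,
    show 2 * (i + 1) = 2 * i + 1 + 1 by omega, Nat.add_sub_cancel, Nat.choose_succ_succ']
  push_cast
  ring

end Eigenvalues

theorem mem_of_forall_sum_choose_smul_mem {M : Type*} [AddCommGroup M] (S : AddSubgroup M)
    {m : ℕ} {d : ℕ → M}
    (h : ∀ x < m, ∑ j ∈ Icc 1 m, (x + j).choose (2 * j - 1) • d j ∈ S) :
    ∀ j ∈ Icc 1 m, d j ∈ S := by
  intro j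
  induction j using Nat.strong_induction_on with
  | _ j ih =>
    intro hj
    obtain ⟨hj1, hjm⟩ := mem_Icc.mp hj
    have hsum := h (j - 1) (by omega)
    rw [← add_sum_erase _ _ hj, show j - 1 + j = 2 * j - 1 by omega, Nat.choose_self,
      one_smul] at hsum
    refine (S.add_mem_cancel_right (sum_mem fun i hi => ?_)).mp hsum
    obtain ⟨hij, hi⟩ := mem_erase.mp hi
    rcases lt_or_gt_of_ne hij with hlt | hgt
    · exact S.nsmul_mem (ih i hlt hi) _
    · rw [Nat.choose_eq_zero_of_lt (by omega), zero_smul]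
      exact S.zero_mem

theorem two_pow_succ_dvd_add_two_pow_iff (a y : ℕ) :
    2 ^ (a + 1) ∣ y + 2 ^ a ↔ 2 ^ a ∣ y ∧ ¬2 ^ (a + 1) ∣ y := by
  have hpos : 0 < 2 ^ a := Nat.two_pow_pos a
  rw [pow_succ]
  constructor
  · intro h
    have hy : 2 ^ a ∣ y := (Nat.dvd_add_left (dvd_refl _)).mp (dvd_trans (Dvd.intro 2 rfl) h)
    refine ⟨hy, fun h2 => ?_⟩
    have := Nat.le_of_dvd hpos ((Nat.dvd_add_right h2).mp h)
    omega
  · rintro ⟨⟨q, rfl⟩, hq⟩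
    rw [Nat.mul_dvd_mul_iff_left hpos] at hq
    rw [← mul_add_one, Nat.mul_dvd_mul_iff_left hpos]
    omega

theorem odd_choose_two_pow_sub_one_iff (b n : ℕ) :
    Odd (n.choose (2 ^ b - 1)) ↔ 2 ^ b ∣ n + 1 := by
  induction b generalizing n with
  | zero => simp
  | succ b ih =>
    have hP := Nat.two_pow_pos b
    have hlucas := Choose.choose_modEq_choose_mod_mul_choose_div_nat (p := 2) (n := n)
      (k := 2 ^ (b + 1) - 1)
    rw [pow_succ, show (2 ^ b * 2 - 1) % 2 = 1 by omega,
      show (2 ^ b * 2 - 1) / 2 = 2 ^ b - 1 by omega, Nat.choose_one_right] at hlucas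
    rw [pow_succ, Nat.odd_iff, hlucas, ← Nat.odd_iff, Nat.odd_mul, ih, mul_comm]
    obtain ⟨q, rfl | rfl⟩ := Nat.even_or_odd' n
    · refine iff_of_false (fun h => by simp at h) fun h => ?_
      have := (Dvd.intro _ rfl).trans h
      omega
    · rw [show (2 * q + 1) % 2 = 1 by omega, show (2 * q + 1) / 2 = q by omega,
        show 2 * q + 1 + 1 = 2 * (q + 1) by ring, Nat.mul_dvd_mul_iff_left two_pos]
      simp

theorem odd_choose_add_two_pow_iff (x a : ℕ) :
    Odd ((x + 2 ^ a).choose (2 * 2 ^ a - 1)) ↔ padicValNat 2 (x + 1) = a := by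
  rw [← pow_succ', odd_choose_two_pow_sub_one_iff, show x + 2 ^ a + 1 = x + 1 + 2 ^ a by ring,
    two_pow_succ_dvd_add_two_pow_iff, padicValNat_dvd_iff_le x.add_one_ne_zero,
    padicValNat_dvd_iff_le x.add_one_ne_zero]
  omega

open scoped Classical in
noncomputable def twoPowIndicator (j : ℕ) : ZMod 2 := if ∃ a : ℕ, j = 2 ^ a then 1 else 0

theorem sum_choose_mul_twoPowIndicator (m x : ℕ) :
    ∑ j ∈ Icc 1 m, ((x + j).choose (2 * j - 1) : ZMod 2) * twoPowIndicator j =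
      if 2 ^ padicValNat 2 (x + 1) ≤ m then 1 else 0 := by
  have hterm : ∀ j, ((x + j).choose (2 * j - 1) : ZMod 2) * twoPowIndicator j =
      if 2 ^ padicValNat 2 (x + 1) = j then 1 else 0 := by
    intro j
    unfold twoPowIndicator
    by_cases hj : ∃ a : ℕ, j = 2 ^ a
    · obtain ⟨a, rfl⟩ := hj
      rw [if_pos ⟨a, rfl⟩, mul_one]
      split_ifs with h <;> rw [Nat.pow_right_inj one_lt_two] at h
      · exact ZMod.natCast_eq_one_iff_odd.mpr ((odd_choose_add_two_pow_iff x a).mpr h)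
      · exact ZMod.natCast_eq_zero_iff_even.mpr
          (Nat.not_odd_iff_even.mp (mt (odd_choose_add_two_pow_iff x a).mp h))
    · rw [if_neg hj, mul_zero, if_neg fun h => hj ⟨_, h.symm⟩]
  simp only [hterm, sum_ite_eq, mem_Icc, Nat.one_le_two_pow, true_and]

theorem odd_iff_iff_intCast_eq_ite (z : ℤ) (P : Prop) [Decidable P] :
    (Odd z ↔ P) ↔ (z : ZMod 2) = if P then 1 else 0 := by
  split_ifs with h
  · simp [h, ZMod.intCast_eq_one_iff_odd]
  · simp [h, ZMod.intCast_eq_zero_iff_even]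

theorem forall_odd_sum_choose_mul_iff {k m : ℕ} (hk : 1 ≤ k) (hmk : m ≤ k) (c : ℕ → ℤ) :
    (∀ x < k, Odd (∑ j ∈ Icc 1 m, ((x + j).choose (2 * j - 1) : ℤ) * c j)) ↔
      2 ^ Nat.log 2 k ≤ m ∧ ∀ j ∈ Icc 1 m, (Odd (c j) ↔ ∃ a : ℕ, j = 2 ^ a) := by
  have hodd : ∀ x, Odd (∑ j ∈ Icc 1 m, ((x + j).choose (2 * j - 1) : ℤ) * c j) ↔
      ∑ j ∈ Icc 1 m, ((x + j).choose (2 * j - 1) : ZMod 2) * (c j : ZMod 2) = 1 := by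
    intro x
    rw [← ZMod.intCast_eq_one_iff_odd]
    push_cast
    rfl
  have hpar : ∀ j,
      (Odd (c j) ↔ ∃ a : ℕ, j = 2 ^ a) ↔ (c j : ZMod 2) = twoPowIndicator j :=
    fun j => by classical exact odd_iff_iff_intCast_eq_ite _ _
  have hv : ∀ x, 2 ^ padicValNat 2 (x + 1) ≤ x + 1 :=
    fun x => Nat.le_of_dvd x.succ_pos pow_padicValNat_dvd
  have hsum : ∀ x, (∀ j ∈ Icc 1 m, (c j : ZMod 2) = twoPowIndicator j) →
      ∑ j ∈ Icc 1 m, ((x + j).choose (2 * j - 1) : ZMod 2) * (c j : ZMod 2) =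
        if 2 ^ padicValNat 2 (x + 1) ≤ m then 1 else 0 := fun x hc => by
    rw [← sum_choose_mul_twoPowIndicator]
    exact sum_congr rfl fun j hj => by rw [hc j hj]
  simp only [hodd, hpar]
  constructor
  · intro h
    have hc : ∀ j ∈ Icc 1 m, (c j : ZMod 2) = twoPowIndicator j := by
      refine fun j hj => sub_eq_zero.mp (AddSubgroup.mem_bot.mp
        (mem_of_forall_sum_choose_smul_mem ⊥ (d := fun j => (c j : ZMod 2) - twoPowIndicator j)
          (fun x hx => ?_) j hj))
      rw [AddSubgroup.mem_bot]
      simp only [smul_sub, sum_sub_distrib, nsmul_eq_mul]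
      rw [h x (by omega), sum_choose_mul_twoPowIndicator, if_pos ((hv x).trans hx), sub_self]
    refine ⟨?_, hc⟩
    have hL : 2 ^ Nat.log 2 k ≤ k := Nat.pow_log_le_self 2 (by omega)
    have h1 := h (2 ^ Nat.log 2 k - 1) (by omega)
    rw [hsum _ hc, Nat.sub_add_cancel Nat.one_le_two_pow, padicValNat.prime_pow] at h1
    by_contra hlt
    rw [if_neg hlt] at h1
    exact zero_ne_one h1
  · rintro ⟨hL, hc⟩ x hx
    rw [hsum x hc, if_pos]
    exact (Nat.pow_le_pow_right two_pos
      (Nat.le_log_of_pow_le one_lt_two ((hv x).trans hx))).trans hL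

theorem forall_eq_div_mul_sum_iff_johnsonCoeff {K : Type*} [Field K] [CharZero K] (k m : ℕ)
    (w c : ℕ → K) {p τ : K} (hp : p ≠ 0) (hτ : τ ≠ 0) :
    (∀ r ∈ Icc 1 m, w r = p / τ * ∑ j ∈ Icc r m,
        c j / ((2 * j).choose j : K) * ((k - r).choose (j - r) : K)) ↔
      ∀ j ∈ Icc 1 m, τ * johnsonCoeff k m w j / p = c j := by
  have hb : ∀ j, ((2 * j).choose j : K) ≠ 0 :=
    fun j => Nat.cast_ne_zero.mpr (Nat.choose_pos (by omega)).ne'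
  refine (forall₂_congr fun r _ => ?_).trans ((forall_eq_sum_choose_mul_iff k 1 m w
    fun j => p / τ * c j / ((2 * j).choose j : K)).trans (forall₂_congr fun j _ => ?_))
  · rw [mul_sum]
    exact Iff.of_eq (congrArg (w r = ·) (sum_congr rfl fun j _ => by ring))
  · rw [johnsonCoeff, div_eq_iff hp, div_eq_iff (hb j), eq_comm]
    field_simp

theorem forall_exists_odd_sum_choose_mul_eq_iff {k m : ℕ} (hk : 1 ≤ k) (hmk : m ≤ k)
    (d : ℕ → ℝ) :
    (∀ x < k, ∃ z : ℤ, Odd z ∧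
        ∑ j ∈ Icc 1 m, ((x + j).choose (2 * j - 1) : ℝ) * d j = z) ↔
      2 ^ Nat.log 2 k ≤ m ∧ ∃ c : ℕ → ℤ,
        (∀ j ∈ Icc 1 m, (Odd (c j) ↔ ∃ a : ℕ, j = 2 ^ a)) ∧
          ∀ j ∈ Icc 1 m, d j = c j := by
  have hcast : ∀ c : ℕ → ℤ, (∀ j ∈ Icc 1 m, d j = c j) → ∀ x,
      ∑ j ∈ Icc 1 m, ((x + j).choose (2 * j - 1) : ℝ) * d j =
        ((∑ j ∈ Icc 1 m, ((x + j).choose (2 * j - 1) : ℤ) * c j : ℤ) : ℝ) := by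
    intro c hc x
    push_cast
    exact sum_congr rfl fun j hj => by rw [hc j hj]
  constructor
  · intro h
    have hint := mem_of_forall_sum_choose_smul_mem (Int.castAddHom ℝ).range (m := m) (d := d)
      fun x hx => by
        obtain ⟨z, -, hz⟩ := h x (by omega)
        exact ⟨z, by simp [hz]⟩
    simp only [AddMonoidHom.mem_range, Int.coe_castAddHom] at hint
    choose! c hc using hint
    have hdc : ∀ j ∈ Icc 1 m, d j = c j := fun j hj => (hc j hj).symm
    obtain ⟨hL, hpar⟩ := (forall_odd_sum_choose_mul_iff hk hmk c).mp fun x hx => by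
      obtain ⟨z, hz, hzeq⟩ := h x hx
      have hsum : ∑ j ∈ Icc 1 m, ((x + j).choose (2 * j - 1) : ℤ) * c j = z := by
        exact_mod_cast (hcast c hdc x).symm.trans hzeq
      exact hsum ▸ hz
    exact ⟨hL, c, hpar, hdc⟩
  · rintro ⟨hL, c, hpar, hdc⟩ x hx
    exact ⟨_, (forall_odd_sum_choose_mul_iff hk hmk c).mpr ⟨hL, hpar⟩ x hx, hcast c hdc x⟩

theorem stmt_14_general (k m : ℕ) (hk : 1 ≤ k) (hm2 : m ≤ k)
    (τ : ℝ) (hτ : 0 < τ) (w : ℕ → ℝ) (f : ℕ → ℝ)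
    (hf : ∀ x, f x = ∑ r ∈ Finset.range (m + 1), w r *
        ∑ j ∈ Finset.range (r + 1), (-1 : ℝ) ^ (r - j) *
          (Nat.choose (2 * j) j : ℝ) * (Nat.choose (k - j) (r - j) : ℝ) *
          (Nat.choose (x + j) (2 * j) : ℝ)) :
    (∀ x < k, ∃ z : ℤ, Odd z ∧ τ * (f (x + 1) - f x) = (z : ℝ) * Real.pi) ↔
      (2 ^ (Nat.log 2 k) ≤ m ∧
        ∃ c : ℕ → ℤ,
          (∀ j, 1 ≤ j → j ≤ m → (Odd (c j) ↔ ∃ a : ℕ, j = 2 ^ a)) ∧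
          (∀ r, 1 ≤ r → r ≤ m →
            w r = (Real.pi / τ) * ∑ j ∈ Finset.Icc r m,
              ((c j : ℝ) / (Nat.choose (2 * j) j : ℝ)) *
                (Nat.choose (k - r) (j - r) : ℝ))) := by
  obtain rfl : f = johnsonEigenvalue k m w := funext hf
  have hdiff : ∀ x (z : ℤ), τ * (johnsonEigenvalue k m w (x + 1) - johnsonEigenvalue k m w x) =
      z * Real.pi ↔ ∑ j ∈ Icc 1 m, ((x + j).choose (2 * j - 1) : ℝ) *
        (τ * johnsonCoeff k m w j / Real.pi) = z := by
    intro x z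
    rw [johnsonEigenvalue_succ_sub, ← div_eq_iff Real.pi_ne_zero, mul_sum, sum_div]
    exact Iff.of_eq (congrArg (· = _) (sum_congr rfl fun j _ => by ring))
  simp only [hdiff, forall_exists_odd_sum_choose_mul_eq_iff hk hm2]
  refine and_congr_right' (exists_congr fun c => and_congr ?_ ?_)
  · simp only [mem_Icc, and_imp]
  · rw [← forall_eq_div_mul_sum_iff_johnsonCoeff k m w _ Real.pi_ne_zero hτ.ne']
    simp only [mem_Icc, and_imp]

/-- Characterization of perfect state transfer at time `τ` on weighted graphs of the
Johnson scheme `J(2k,k)`: all scaled eigenvalue differences `τ(f(x+1) - f(x))` are odd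
multiples of `π` iff `m ≥ 2^{⌊log₂ k⌋}` and the weights come from integers `c_j` that
are odd exactly at powers of `2`. -/
theorem stmt_14 (k m : ℕ) (hk : 1 ≤ k) (hm1 : 1 ≤ m) (hm2 : m ≤ k)
    (τ : ℝ) (hτ : 0 < τ) (w : ℕ → ℝ) (f : ℕ → ℝ)
    (hf : ∀ x, f x = ∑ r ∈ Finset.range (m + 1), w r *
        ∑ j ∈ Finset.range (r + 1), (-1 : ℝ) ^ (r - j) *
          (Nat.choose (2 * j) j : ℝ) * (Nat.choose (k - j) (r - j) : ℝ) *
          (Nat.choose (x + j) (2 * j) : ℝ)) :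
    (∀ x < k, ∃ z : ℤ, Odd z ∧ τ * (f (x + 1) - f x) = (z : ℝ) * Real.pi) ↔
      (2 ^ (Nat.log 2 k) ≤ m ∧
        ∃ c : ℕ → ℤ,
          (∀ j, 1 ≤ j → j ≤ m → (Odd (c j) ↔ ∃ a : ℕ, j = 2 ^ a)) ∧
          (∀ r, 1 ≤ r → r ≤ m →
            w r = (Real.pi / τ) * ∑ j ∈ Finset.Icc r m,
              ((c j : ℝ) / (Nat.choose (2 * j) j : ℝ)) *
                (Nat.choose (k - r) (j - r) : ℝ))) :=
  stmt_14_general k m hk hm2 τ hτ w f hf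
end
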